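/- arXiv:2410.17254 — 6 statements merged into one kernel-verified Lean document; each statement's English description precedes it below -/
import Mathlib

section
/- Let ‖·‖ be a norm on ℝ^d whose closed unit ball is strictly convex, and let ‖·‖₂ denote the Euclidean norm. Then a set Θ ⊆ ℝ^d is permeable with respect to ‖·‖ if and only if it is permeable with respect to ‖·‖₂. The same equivalence holds for finite permeability and for null permeability. -/
open Set
open scoped ENNReal

/-- The length (total variation w.r.t. the norm-like function `N`) of a path `γ` over
`[a,b]`, as the supremum over partitions `a = t₀ ≤ t₁ ≤ … ≤ tₙ = b` of the sums of
`N`-norms of increments. -/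
noncomputable def lenWith {d : ℕ} (N : EuclideanSpace ℝ (Fin d) → ℝ)
    (γ : ℝ → EuclideanSpace ℝ (Fin d)) (a b : ℝ) : ℝ≥0∞ :=
  ⨆ n : ℕ, ⨆ t : {t : ℕ → ℝ // Monotone t ∧ t 0 = a ∧ t n = b},
    ∑ i ∈ Finset.range n, ENNReal.ofReal (N (γ (t.1 (i + 1)) - γ (t.1 i)))

/-- `Θ ⊆ ℝ^d` is null permeable w.r.t. the norm `N`. -/
def NullPermeableWith {d : ℕ} (N : EuclideanSpace ℝ (Fin d) → ℝ)
    (Θ : Set (EuclideanSpace ℝ (Fin d))) : Prop :=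
  ∀ x y : EuclideanSpace ℝ (Fin d), ∀ δ : ℝ, 0 < δ →
    ∃ (a b : ℝ) (γ : ℝ → EuclideanSpace ℝ (Fin d)),
      a < b ∧ ContinuousOn γ (Set.Icc a b) ∧ γ a = x ∧ γ b = y ∧
      lenWith N γ a b ≤ ENNReal.ofReal (N (y - x) + δ) ∧
      γ '' Set.Icc a b ∩ Θ ⊆ {x, y}

/-- `Θ ⊆ ℝ^d` is finitely permeable w.r.t. the norm `N`. -/
def FinitelyPermeableWith {d : ℕ} (N : EuclideanSpace ℝ (Fin d) → ℝ)
    (Θ : Set (EuclideanSpace ℝ (Fin d))) : Prop :=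
  ∀ x y : EuclideanSpace ℝ (Fin d), ∀ δ : ℝ, 0 < δ →
    ∃ (a b : ℝ) (γ : ℝ → EuclideanSpace ℝ (Fin d)),
      a < b ∧ ContinuousOn γ (Set.Icc a b) ∧ γ a = x ∧ γ b = y ∧
      lenWith N γ a b ≤ ENNReal.ofReal (N (y - x) + δ) ∧
      (γ '' Set.Icc a b ∩ Θ).Finite

/-- `Θ ⊆ ℝ^d` is permeable w.r.t. the norm `N`. -/
def PermeableWith {d : ℕ} (N : EuclideanSpace ℝ (Fin d) → ℝ)
    (Θ : Set (EuclideanSpace ℝ (Fin d))) : Prop :=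
  ∀ x y : EuclideanSpace ℝ (Fin d), ∀ δ : ℝ, 0 < δ →
    ∃ (a b : ℝ) (γ : ℝ → EuclideanSpace ℝ (Fin d)),
      a < b ∧ ContinuousOn γ (Set.Icc a b) ∧ γ a = x ∧ γ b = y ∧
      lenWith N γ a b ≤ ENNReal.ofReal (N (y - x) + δ) ∧
      (closure (γ '' Set.Icc a b ∩ Θ)).Countable

/-!
Let `w = y - x`. A supporting functional `f ≤ N` with `f w = N w` turns every partition sum
of increments into `∑ M ≤ α ∑ f + C (∑ N - ∑ f) = α f w + C (∑ N - f w)`, provided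
`M ≤ α f + C (N - f)` pointwise. Strict convexity of the `N`-ball makes `N - f` vanish on the
`N`-unit sphere only in the direction of `w`, so by compactness this pointwise bound holds with
`α = (M w + ε) / N w` and some finite `C`. Hence paths that are almost `N`-geodesic from `x` to
`y` are almost `M`-geodesic for every norm `M`, while the side condition on `γ ∩ Θ` is unchanged.
The Euclidean norm is itself strictly convex, so both directions follow.
-/

section NormFun

variable {E : Type*} [AddCommGroup E] [Module ℝ E]

-- A norm given as a bare function: `E` may already carry another norm, as `ℝ^d` does.
structure IsNormFun (N : E → ℝ) : Prop where
  eq_zero_iff : ∀ x, N x = 0 ↔ x = 0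
  smul : ∀ (c : ℝ) (x : E), N (c • x) = |c| * N x
  add_le : ∀ x y, N (x + y) ≤ N x + N y

def HasStrictlyConvexUnitBall (N : E → ℝ) : Prop :=
  ∀ x y, N x = 1 → N y = 1 → x ≠ y → N ((2 : ℝ)⁻¹ • (x + y)) < 1

namespace IsNormFun

variable {N : E → ℝ}

theorem map_zero (hN : IsNormFun N) : N 0 = 0 := (hN.eq_zero_iff 0).2 rfl

theorem smul_of_nonneg (hN : IsNormFun N) {c : ℝ} (hc : 0 ≤ c) (x : E) :
    N (c • x) = c * N x := by
  rw [hN.smul, abs_of_nonneg hc]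

theorem nonneg (hN : IsNormFun N) (x : E) : 0 ≤ N x := by
  have h := hN.add_le x (-x)
  rw [add_neg_cancel, hN.map_zero, ← neg_one_smul (R := ℝ) x, hN.smul] at h
  norm_num at h
  linarith

theorem pos (hN : IsNormFun N) {x : E} (hx : x ≠ 0) : 0 < N x :=
  (hN.nonneg x).lt_of_ne fun h => hx ((hN.eq_zero_iff x).1 h.symm)

theorem apply_inv_smul_self (hN : IsNormFun N) {x : E} (hx : x ≠ 0) :
    N ((N x)⁻¹ • x) = 1 := by
  rw [hN.smul_of_nonneg (inv_nonneg.2 (hN.nonneg x)), inv_mul_cancel₀ (hN.pos hx).ne']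

theorem convexOn (hN : IsNormFun N) : ConvexOn ℝ univ N := by
  refine ⟨convex_univ, fun x _ y _ a b ha hb _ => ?_⟩
  calc N (a • x + b • y) ≤ N (a • x) + N (b • y) := hN.add_le _ _
    _ = a • N x + b • N y := by rw [hN.smul_of_nonneg ha, hN.smul_of_nonneg hb]; rfl

theorem exists_linear_le_eq (hN : IsNormFun N) (w : E) :
    ∃ f : E →ₗ[ℝ] ℝ, (∀ x, f x ≤ N x) ∧ f w = N w := by
  rcases eq_or_ne w 0 with rfl | hw
  · exact ⟨0, hN.nonneg, by simp [hN.map_zero]⟩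
  let g : E →ₗ.[ℝ] ℝ := LinearPMap.mkSpanSingleton w (N w) hw
  have hg : ∀ x : g.domain, g x ≤ N x := by
    rintro ⟨x, hx⟩
    obtain ⟨c, rfl⟩ := Submodule.mem_span_singleton.1 hx
    rw [LinearPMap.mkSpanSingleton'_apply, smul_eq_mul, hN.smul]
    exact mul_le_mul_of_nonneg_right (le_abs_self c) (hN.nonneg w)
  obtain ⟨f, hfg, hfN⟩ := exists_extension_of_le_sublinear g N
    (fun c hc x => hN.smul_of_nonneg hc.le x) hN.add_le hg
  refine ⟨f, hfN, ?_⟩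
  rw [hfg ⟨w, Submodule.mem_span_singleton_self w⟩]
  exact LinearPMap.mkSpanSingleton_apply ℝ ℝ hw (N w)

end IsNormFun

theorem HasStrictlyConvexUnitBall.eq_of_linear_le {N : E → ℝ} (hconv : HasStrictlyConvexUnitBall N)
    {f : E →ₗ[ℝ] ℝ} (hf : ∀ x, f x ≤ N x) {x y : E} (hx : N x = 1) (hy : N y = 1)
    (hfx : f x = 1) (hfy : f y = 1) : x = y := by
  by_contra hxy
  have hmid : f ((2 : ℝ)⁻¹ • (x + y)) = 1 := by
    rw [map_smul, map_add, hfx, hfy, smul_eq_mul]; norm_num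
  linarith [hf ((2 : ℝ)⁻¹ • (x + y)), hconv x y hx hy hxy]

end NormFun

theorem IsCompact.exists_nonneg_forall_le_mul {X : Type*} [TopologicalSpace X] {K : Set X}
    (hK : IsCompact K) {φ ψ : X → ℝ} (hφ : Continuous φ) (hψ : Continuous ψ)
    (hψ0 : ∀ x ∈ K, 0 ≤ ψ x) (hpos : ∀ x ∈ K, 0 ≤ φ x → 0 < ψ x) :
    ∃ C, 0 ≤ C ∧ ∀ x ∈ K, φ x ≤ C * ψ x := by
  set A := K ∩ {x | 0 ≤ φ x}
  have hA : IsCompact A := hK.inter_right (isClosed_le continuous_const hφ)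
  have hquot : ContinuousOn (fun x => φ x / ψ x) A :=
    hφ.continuousOn.div hψ.continuousOn fun x hx => (hpos x hx.1 hx.2).ne'
  obtain ⟨C, hC⟩ := hA.bddAbove_image hquot
  refine ⟨max C 0, le_max_right _ _, fun x hx => ?_⟩
  by_cases hφx : 0 ≤ φ x
  · have hψx := hpos x hx hφx
    calc φ x = φ x / ψ x * ψ x := by field_simp
      _ ≤ max C 0 * ψ x := by
        gcongr
        exact (hC ⟨x, ⟨hx, hφx⟩, rfl⟩).trans (le_max_left _ _)
  · exact (lt_of_not_ge hφx).le.trans (mul_nonneg (le_max_right _ _) (hψ0 x hx))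

section FiniteDimensional

variable {E : Type*} [NormedAddCommGroup E] [NormedSpace ℝ E] [FiniteDimensional ℝ E]
  {N M : E → ℝ}

theorem IsNormFun.continuous (hN : IsNormFun N) : Continuous N :=
  hN.convexOn.locallyLipschitz.continuous

theorem IsNormFun.isCompact_unitSphere (hN : IsNormFun N) : IsCompact {x | N x = 1} := by
  have hsub : {x | N x = 1} ⊆ (fun v => (N v)⁻¹ • v) '' Metric.sphere 0 1 := by
    intro x (hx : N x = 1)
    have hx0 : x ≠ 0 := by rintro rfl; simp [hN.map_zero] at hx
    refine ⟨‖x‖⁻¹ • x, by simp [norm_smul, hx0], ?_⟩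
    dsimp only
    rw [hN.smul_of_nonneg (inv_nonneg.2 (norm_nonneg x)), hx, mul_one, inv_inv, smul_smul,
      mul_inv_cancel₀ (norm_ne_zero_iff.2 hx0), one_smul]
  refine ((isCompact_sphere 0 1).image_of_continuousOn ?_).of_isClosed_subset
    (isClosed_eq hN.continuous continuous_const) hsub
  refine ((hN.continuous.continuousOn.inv₀ fun v hv => ?_).smul continuousOn_id)
  exact (hN.pos (ne_zero_of_mem_unit_sphere ⟨v, hv⟩)).ne'

theorem HasStrictlyConvexUnitBall.exists_le_of_linear_le (hconv : HasStrictlyConvexUnitBall N)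
    (hN : IsNormFun N) (hM : IsNormFun M) {f : E →ₗ[ℝ] ℝ} (hf : ∀ x, f x ≤ N x) {w : E}
    (hw : w ≠ 0) (hfw : f w = N w) {ε : ℝ} (hε : 0 < ε) :
    ∃ C, 0 ≤ C ∧ ∀ x, M x ≤ (M w + ε) / N w * f x + C * (N x - f x) := by
  set α := (M w + ε) / N w
  have hNw := hN.pos hw
  set u := (N w)⁻¹ • w
  have hNu : N u = 1 := hN.apply_inv_smul_self hw
  have hfu : f u = 1 := by simp only [u, map_smul, smul_eq_mul, hfw, inv_mul_cancel₀ hNw.ne']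
  -- On the unit sphere, `N x = f x` forces `x = u`, where `M u - α f u = -ε / N w < 0`.
  have hpos : ∀ x ∈ {x | N x = 1}, 0 ≤ M x - α * f x → 0 < N x - f x := by
    intro x (hx : N x = 1) hφ
    refine sub_pos.2 ((hf x).lt_of_ne fun hfx => ?_)
    obtain rfl := hconv.eq_of_linear_le hf hx hNu (hfx.trans hx) hfu
    have hMu : M u = M w / N w := by
      rw [hM.smul_of_nonneg (inv_nonneg.2 hNw.le), inv_mul_eq_div]
    rw [hMu, hfu, mul_one, ← sub_div, le_div_iff₀ hNw] at hφ
    linarith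
  obtain ⟨C, hC, hCK⟩ := hN.isCompact_unitSphere.exists_nonneg_forall_le_mul
    (φ := fun x => M x - α * f x) (ψ := fun x => N x - f x) (hM.continuous.sub (continuous_const.mul f.continuous_of_finiteDimensional))
    (hN.continuous.sub f.continuous_of_finiteDimensional)
    (fun x _ => sub_nonneg.2 (hf x)) hpos
  refine ⟨C, hC, fun x => ?_⟩
  rcases eq_or_ne x 0 with rfl | hx
  · simp [hM.map_zero, hN.map_zero]
  have hNx := hN.pos hx
  have hbound := hCK _ (hN.apply_inv_smul_self hx)
  rw [hM.smul_of_nonneg (inv_nonneg.2 hNx.le), hN.apply_inv_smul_self hx, map_smul,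
    smul_eq_mul] at hbound
  have hscaled := mul_le_mul_of_nonneg_left hbound hNx.le
  field_simp at hscaled
  linarith

end FiniteDimensional

theorem isNormFun_norm {E : Type*} [NormedAddCommGroup E] [NormedSpace ℝ E] :
    IsNormFun fun v : E => ‖v‖ :=
  ⟨fun _ => norm_eq_zero, fun c v => by rw [norm_smul, Real.norm_eq_abs], norm_add_le⟩

theorem hasStrictlyConvexUnitBall_norm {E : Type*} [NormedAddCommGroup E] [NormedSpace ℝ E]
    [StrictConvexSpace ℝ E] : HasStrictlyConvexUnitBall fun v : E => ‖v‖ := by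
  intro x y (hx : ‖x‖ = 1) (hy : ‖y‖ = 1) hxy
  have h := (norm_midpoint_lt_iff (hx.trans hy.symm)).2 hxy
  rwa [one_div, hx] at h

section Length

open Finset

variable {d : ℕ} {N M : EuclideanSpace ℝ (Fin d) → ℝ} {γ : ℝ → EuclideanSpace ℝ (Fin d)}
  {a b : ℝ}

theorem lenWith_const (hM : M 0 = 0) (x : EuclideanSpace ℝ (Fin d)) (a b : ℝ) :
    lenWith M (fun _ => x) a b = 0 := by
  simp [lenWith, hM]

theorem sum_le_of_lenWith_le (hN : ∀ v, 0 ≤ N v) {L : ℝ} (hL : 0 ≤ L)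
    (h : lenWith N γ a b ≤ ENNReal.ofReal L) {n : ℕ}
    (t : {t : ℕ → ℝ // Monotone t ∧ t 0 = a ∧ t n = b}) :
    ∑ i ∈ range n, N (γ (t.1 (i + 1)) - γ (t.1 i)) ≤ L := by
  rw [← ENNReal.ofReal_le_ofReal_iff hL, ENNReal.ofReal_sum_of_nonneg fun i _ => hN _]
  exact (le_iSup₂_of_le n t le_rfl : _ ≤ lenWith N γ a b).trans h

theorem lenWith_le_of_forall_sum_le (hM : ∀ v, 0 ≤ M v) {L : ℝ}
    (h : ∀ n (t : {t : ℕ → ℝ // Monotone t ∧ t 0 = a ∧ t n = b}),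
      ∑ i ∈ range n, M (γ (t.1 (i + 1)) - γ (t.1 i)) ≤ L) :
    lenWith M γ a b ≤ ENNReal.ofReal L :=
  iSup₂_le fun n t => by
    rw [← ENNReal.ofReal_sum_of_nonneg fun i _ => hM _]
    exact ENNReal.ofReal_le_ofReal (h n t)

theorem lenWith_le_of_le_linear_add_mul (hN : ∀ v, 0 ≤ N v) (hM : ∀ v, 0 ≤ M v)
    (f : EuclideanSpace ℝ (Fin d) →ₗ[ℝ] ℝ) {α C L : ℝ} (hC : 0 ≤ C)
    (hMN : ∀ v, M v ≤ α * f v + C * (N v - f v)) (hL : 0 ≤ L)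
    (h : lenWith N γ a b ≤ ENNReal.ofReal L) :
    lenWith M γ a b ≤ ENNReal.ofReal (α * f (γ b - γ a) + C * (L - f (γ b - γ a))) := by
  refine lenWith_le_of_forall_sum_le hM fun n ⟨t, hmono, ht0, htn⟩ => ?_
  have hf : ∑ i ∈ range n, f (γ (t (i + 1)) - γ (t i)) = f (γ b - γ a) := by
    simp_rw [map_sub]
    rw [sum_range_sub (fun i => f (γ (t i))), ht0, htn]
  calc ∑ i ∈ range n, M (γ (t (i + 1)) - γ (t i))
      ≤ ∑ i ∈ range n, (α * f (γ (t (i + 1)) - γ (t i))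
          + C * (N (γ (t (i + 1)) - γ (t i)) - f (γ (t (i + 1)) - γ (t i)))) :=
        sum_le_sum fun i _ => hMN _
    _ = α * f (γ b - γ a) + C * (∑ i ∈ range n, N (γ (t (i + 1)) - γ (t i)) - f (γ b - γ a)) := by
        rw [sum_add_distrib, ← mul_sum, ← mul_sum, sum_sub_distrib, hf]
    _ ≤ α * f (γ b - γ a) + C * (L - f (γ b - γ a)) := by
        gcongr
        exact sum_le_of_lenWith_le hN hL h ⟨t, hmono, ht0, htn⟩

theorem HasStrictlyConvexUnitBall.exists_lenWith_le (hconv : HasStrictlyConvexUnitBall N)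
    (hN : IsNormFun N) (hM : IsNormFun M) {x y : EuclideanSpace ℝ (Fin d)} (hxy : x ≠ y)
    {δ : ℝ} (hδ : 0 < δ) :
    ∃ δ' > 0, ∀ (a b : ℝ) (γ : ℝ → EuclideanSpace ℝ (Fin d)), γ a = x → γ b = y →
      lenWith N γ a b ≤ ENNReal.ofReal (N (y - x) + δ') →
      lenWith M γ a b ≤ ENNReal.ofReal (M (y - x) + δ) := by
  have hw : y - x ≠ 0 := sub_ne_zero.2 hxy.symm
  obtain ⟨f, hf, hfw⟩ := hN.exists_linear_le_eq (y - x)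
  obtain ⟨C, hC, hMN⟩ := hconv.exists_le_of_linear_le hN hM hf hw hfw (half_pos hδ)
  have hCδ : C * (δ / (2 * (C + 1))) ≤ δ / 2 := by
    rw [mul_div_assoc', div_le_div_iff₀ (by positivity) two_pos]
    nlinarith
  refine ⟨δ / (2 * (C + 1)), by positivity, fun a b γ ha hb hlen => ?_⟩
  refine (lenWith_le_of_le_linear_add_mul hN.nonneg hM.nonneg f hC hMN
    (add_nonneg (hN.nonneg _) (by positivity)) hlen).trans (ENNReal.ofReal_le_ofReal ?_)
  rw [ha, hb, hfw, div_mul_cancel₀ _ (hN.pos hw).ne', add_sub_cancel_left]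
  linarith

theorem HasStrictlyConvexUnitBall.forall_exists_path (hconv : HasStrictlyConvexUnitBall N)
    (hN : IsNormFun N) (hM : IsNormFun M)
    (Q : EuclideanSpace ℝ (Fin d) → EuclideanSpace ℝ (Fin d) → ℝ → ℝ →
      (ℝ → EuclideanSpace ℝ (Fin d)) → Prop)
    (hQ : ∀ x, Q x x 0 1 fun _ => x)
    (h : ∀ x y : EuclideanSpace ℝ (Fin d), ∀ δ : ℝ, 0 < δ →
      ∃ (a b : ℝ) (γ : ℝ → EuclideanSpace ℝ (Fin d)),
        a < b ∧ ContinuousOn γ (Icc a b) ∧ γ a = x ∧ γ b = y ∧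
        lenWith N γ a b ≤ ENNReal.ofReal (N (y - x) + δ) ∧ Q x y a b γ) :
    ∀ x y : EuclideanSpace ℝ (Fin d), ∀ δ : ℝ, 0 < δ →
      ∃ (a b : ℝ) (γ : ℝ → EuclideanSpace ℝ (Fin d)),
        a < b ∧ ContinuousOn γ (Icc a b) ∧ γ a = x ∧ γ b = y ∧
        lenWith M γ a b ≤ ENNReal.ofReal (M (y - x) + δ) ∧ Q x y a b γ := by
  intro x y δ hδ
  rcases eq_or_ne x y with rfl | hxy
  · exact ⟨0, 1, fun _ => x, one_pos, continuousOn_const, rfl, rfl,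
      by simp [lenWith_const hM.map_zero], hQ x⟩
  obtain ⟨δ', hδ', hlen⟩ := hconv.exists_lenWith_le hN hM hxy hδ
  obtain ⟨a, b, γ, hab, hγ, ha, hb, hγN, hQγ⟩ := h x y δ' hδ'
  exact ⟨a, b, γ, hab, hγ, ha, hb, hlen a b γ ha hb hγN, hQγ⟩

end Length

section Permeability

variable {d : ℕ} {N M : EuclideanSpace ℝ (Fin d) → ℝ} {Θ : Set (EuclideanSpace ℝ (Fin d))}

theorem const_image_inter_subset (x : EuclideanSpace ℝ (Fin d)) :
    (fun _ : ℝ => x) '' Icc 0 1 ∩ Θ ⊆ {x} :=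
  fun _ hz => range_const_subset (image_subset_range _ _ hz.1)

theorem PermeableWith.of_hasStrictlyConvexUnitBall (hconv : HasStrictlyConvexUnitBall N)
    (hN : IsNormFun N) (hM : IsNormFun M) (h : PermeableWith N Θ) : PermeableWith M Θ :=
  hconv.forall_exists_path hN hM (fun _ _ a b γ => (closure (γ '' Icc a b ∩ Θ)).Countable)
    (fun x => (countable_singleton x).mono
      (closure_minimal (const_image_inter_subset x) isClosed_singleton)) h

theorem FinitelyPermeableWith.of_hasStrictlyConvexUnitBall (hconv : HasStrictlyConvexUnitBall N)
    (hN : IsNormFun N) (hM : IsNormFun M) (h : FinitelyPermeableWith N Θ) :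
    FinitelyPermeableWith M Θ :=
  hconv.forall_exists_path hN hM (fun _ _ a b γ => (γ '' Icc a b ∩ Θ).Finite)
    (fun x => (finite_singleton x).subset (const_image_inter_subset x)) h

theorem NullPermeableWith.of_hasStrictlyConvexUnitBall (hconv : HasStrictlyConvexUnitBall N)
    (hN : IsNormFun N) (hM : IsNormFun M) (h : NullPermeableWith N Θ) :
    NullPermeableWith M Θ :=
  hconv.forall_exists_path hN hM (fun x y a b γ => γ '' Icc a b ∩ Θ ⊆ {x, y})
    (fun x => (const_image_inter_subset x).trans (subset_insert x {x})) h

end Permeability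

/-- If `N` is a norm on `ℝ^d` whose closed unit ball is strictly convex, then a set
`Θ ⊆ ℝ^d` is permeable w.r.t. `N` iff it is permeable w.r.t. the Euclidean norm, and the
same equivalence holds for finite permeability and null permeability. -/
theorem permeable_iff_of_strictly_convex_norm {d : ℕ}
    (N : EuclideanSpace ℝ (Fin d) → ℝ)
    (hN0 : ∀ x, N x = 0 ↔ x = 0)
    (hNsmul : ∀ (c : ℝ) (x), N (c • x) = |c| * N x)
    (hNadd : ∀ x y, N (x + y) ≤ N x + N y)
    (hconv : ∀ x y, N x = 1 → N y = 1 → x ≠ y → N ((2 : ℝ)⁻¹ • (x + y)) < 1)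
    (Θ : Set (EuclideanSpace ℝ (Fin d))) :
    (PermeableWith N Θ ↔ PermeableWith (fun v => ‖v‖) Θ) ∧
    (FinitelyPermeableWith N Θ ↔ FinitelyPermeableWith (fun v => ‖v‖) Θ) ∧
    (NullPermeableWith N Θ ↔ NullPermeableWith (fun v => ‖v‖) Θ) := by
  have hN : IsNormFun N := ⟨hN0, hNsmul, hNadd⟩
  have hE : IsNormFun fun v : EuclideanSpace ℝ (Fin d) => ‖v‖ := isNormFun_norm
  have hconvE : HasStrictlyConvexUnitBall fun v : EuclideanSpace ℝ (Fin d) => ‖v‖ :=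
    hasStrictlyConvexUnitBall_norm
  exact ⟨⟨.of_hasStrictlyConvexUnitBall hconv hN hE, .of_hasStrictlyConvexUnitBall hconvE hE hN⟩,
    ⟨.of_hasStrictlyConvexUnitBall hconv hN hE, .of_hasStrictlyConvexUnitBall hconvE hE hN⟩,
    ⟨.of_hasStrictlyConvexUnitBall hconv hN hE, .of_hasStrictlyConvexUnitBall hconvE hE hN⟩⟩
end

section
/- If a set Θ ⊆ ℝ^d is permeable with respect to the Euclidean norm ‖·‖₂, then Θ is permeable with respect to every norm ‖·‖ on ℝ^d. The same statement holds for finite permeability and for null permeability. -/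
open Set
open scoped ENNReal

/-! Split each increment `v i` of a polygon inscribed in the path along the unit vector `u` of
`y - x`: `v i = ⟪u, v i⟫ • u + w i`. If the Euclidean length of the polygon exceeds `‖y - x‖` by
`Δ`, then `∑ |⟪u, v i⟫| ≤ ‖y - x‖ + 2Δ`, and `‖w i‖² ≤ 2‖v i‖(‖v i‖ - ⟪u, v i⟫)` gives, by
Cauchy–Schwarz, `∑ ‖w i‖ ≤ √(2(‖y - x‖ + Δ)Δ)`. As `N ≤ C‖·‖`, the `N`-length of the path then
exceeds `N (y - x)` by at most `C (2Δ + √(2(‖y - x‖ + Δ)Δ))`, which tends to `0` with `Δ`. So a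
Euclidean witness path with small enough `Δ` is also a witness for `N`, meeting `Θ` in the same set.
-/

open scoped RealInnerProductSpace Topology

section InnerProductSpace

variable {E : Type*} [NormedAddCommGroup E] [InnerProductSpace ℝ E] {ι : Type*}

theorem abs_real_inner_le_norm_of_norm_le_one {u : E} (hu : ‖u‖ ≤ 1) (v : E) :
    |⟪u, v⟫| ≤ ‖v‖ :=
  (abs_real_inner_le_norm u v).trans (mul_le_of_le_one_left (norm_nonneg v) hu)

theorem norm_sub_inner_smul_sq_le {u : E} (hu : ‖u‖ ≤ 1) (v : E) :
    ‖v - ⟪u, v⟫ • u‖ ^ 2 ≤ 2 * ‖v‖ * (‖v‖ - ⟪u, v⟫) := by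
  have hinner := abs_real_inner_le_norm_of_norm_le_one hu v
  have hu2 : ‖u‖ ^ 2 ≤ 1 := pow_le_one₀ (norm_nonneg u) hu
  rw [norm_sub_sq_real, real_inner_smul_right, real_inner_comm u v, norm_smul, mul_pow,
    Real.norm_eq_abs, sq_abs]
  nlinarith [abs_le.mp hinner, sq_nonneg ⟪u, v⟫]

theorem sum_norm_sub_inner_smul_le (s : Finset ι) {u : E} (hu : ‖u‖ ≤ 1) (v : ι → E) :
    ∑ i ∈ s, ‖v i - ⟪u, v i⟫ • u‖ ≤
      √(∑ i ∈ s, 2 * ‖v i‖) * √(∑ i ∈ s, (‖v i‖ - ⟪u, v i⟫)) := by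
  have hdefect (i : ι) : 0 ≤ ‖v i‖ - ⟪u, v i⟫ :=
    sub_nonneg.mpr <| (le_abs_self _).trans (abs_real_inner_le_norm_of_norm_le_one hu (v i))
  calc ∑ i ∈ s, ‖v i - ⟪u, v i⟫ • u‖
      ≤ ∑ i ∈ s, √(2 * ‖v i‖) * √(‖v i‖ - ⟪u, v i⟫) := by
        refine Finset.sum_le_sum fun i _ => ?_
        rw [← Real.sqrt_mul (by positivity)]
        exact Real.le_sqrt_of_sq_le (norm_sub_inner_smul_sq_le hu (v i))
    _ ≤ _ := Real.sum_sqrt_mul_sqrt_le s (fun i => by positivity) hdefect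

theorem Seminorm.sum_le_add_of_sum_norm_le (p : Seminorm ℝ E) {C : ℝ} (hC0 : 0 ≤ C)
    (hC : ∀ x, p x ≤ C * ‖x‖) (s : Finset ι) (v : ι → E) {Δ : ℝ}
    (hΔ : ∑ i ∈ s, ‖v i‖ ≤ ‖∑ i ∈ s, v i‖ + Δ) :
    ∑ i ∈ s, p (v i) ≤
      p (∑ i ∈ s, v i) + C * (2 * Δ + √(2 * (‖∑ i ∈ s, v i‖ + Δ) * Δ)) := by
  set S := ∑ i ∈ s, v i
  -- the unit vector along `S`, or `0` when `S = 0` (as `0⁻¹ = 0`); no case split is needed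
  set u : E := ‖S‖⁻¹ • S
  have hu : ‖u‖ ≤ 1 := by
    rw [norm_smul, norm_inv, norm_norm]
    exact inv_mul_le_one
  have hSu : S = ‖S‖ • u := by
    rcases eq_or_ne S 0 with hS | hS
    · simp [hS]
    · rw [smul_smul, mul_inv_cancel₀ (norm_ne_zero_iff.mpr hS), one_smul]
  have hsum_inner : ∑ i ∈ s, ⟪u, v i⟫ = ‖S‖ := by
    rw [← inner_sum, real_inner_smul_left, real_inner_self_eq_norm_sq]
    rcases eq_or_ne ‖S‖ 0 with hS | hS
    · simp [hS]
    · field_simp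
  have hdefect : ∑ i ∈ s, (‖v i‖ - ⟪u, v i⟫) ≤ Δ := by
    rw [Finset.sum_sub_distrib, hsum_inner]
    linarith
  have hΔ0 : 0 ≤ Δ := by
    have := norm_sum_le s v
    linarith
  have habs : ∑ i ∈ s, |⟪u, v i⟫| ≤ ‖S‖ + 2 * Δ := by
    have hle (i : ι) : |⟪u, v i⟫| ≤ ⟪u, v i⟫ + 2 * (‖v i‖ - ⟪u, v i⟫) := by
      have := abs_real_inner_le_norm_of_norm_le_one hu (v i)
      rcases abs_cases ⟪u, v i⟫ with ⟨h, _⟩ | ⟨h, _⟩ <;> linarith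
    calc ∑ i ∈ s, |⟪u, v i⟫|
        ≤ ∑ i ∈ s, (⟪u, v i⟫ + 2 * (‖v i‖ - ⟪u, v i⟫)) := Finset.sum_le_sum fun i _ => hle i
      _ ≤ ‖S‖ + 2 * Δ := by
        rw [Finset.sum_add_distrib, ← Finset.mul_sum, hsum_inner]
        linarith
  have horth : ∑ i ∈ s, ‖v i - ⟪u, v i⟫ • u‖ ≤ √(2 * (‖S‖ + Δ) * Δ) := by
    calc ∑ i ∈ s, ‖v i - ⟪u, v i⟫ • u‖
        ≤ √(∑ i ∈ s, 2 * ‖v i‖) * √(∑ i ∈ s, (‖v i‖ - ⟪u, v i⟫)) :=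
          sum_norm_sub_inner_smul_le s hu v
      _ ≤ √(2 * (‖S‖ + Δ)) * √Δ := by
        rw [← Finset.mul_sum]
        gcongr
      _ = √(2 * (‖S‖ + Δ) * Δ) := (Real.sqrt_mul (by positivity) Δ).symm
  have hpu : p u ≤ C := (hC u).trans (mul_le_of_le_one_right hC0 hu)
  calc ∑ i ∈ s, p (v i)
      ≤ ∑ i ∈ s, (|⟪u, v i⟫| * p u + C * ‖v i - ⟪u, v i⟫ • u‖) := by
        refine Finset.sum_le_sum fun i _ => ?_
        calc p (v i) = p (⟪u, v i⟫ • u + (v i - ⟪u, v i⟫ • u)) := by rw [add_sub_cancel]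
          _ ≤ p (⟪u, v i⟫ • u) + p (v i - ⟪u, v i⟫ • u) := map_add_le_add p _ _
          _ ≤ |⟪u, v i⟫| * p u + C * ‖v i - ⟪u, v i⟫ • u‖ := by
            rw [map_smul_eq_mul, Real.norm_eq_abs]
            gcongr
            exact hC _
    _ ≤ (‖S‖ + 2 * Δ) * p u + C * √(2 * (‖S‖ + Δ) * Δ) := by
        rw [Finset.sum_add_distrib, ← Finset.sum_mul, ← Finset.mul_sum]
        gcongr
    _ ≤ p S + C * (2 * Δ + √(2 * (‖S‖ + Δ) * Δ)) := by
        have hpS : p S = ‖S‖ * p u := by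
          conv_lhs => rw [hSu]
          rw [map_smul_eq_mul, norm_norm]
        rw [hpS]
        nlinarith

end InnerProductSpace

section Paths

variable {d : ℕ}

theorem lenWith_le_of_lenWith_norm_le (p : Seminorm ℝ (EuclideanSpace ℝ (Fin d))) {C : ℝ}
    (hC0 : 0 ≤ C) (hC : ∀ x, p x ≤ C * ‖x‖) {γ : ℝ → EuclideanSpace ℝ (Fin d)} {a b Δ : ℝ}
    (hΔ : 0 ≤ Δ) (hlen : lenWith (fun v => ‖v‖) γ a b ≤ ENNReal.ofReal (‖γ b - γ a‖ + Δ)) :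
    lenWith p γ a b ≤
      ENNReal.ofReal (p (γ b - γ a) + C * (2 * Δ + √(2 * (‖γ b - γ a‖ + Δ) * Δ))) := by
  refine iSup₂_le fun n ⟨t, ht, ht0, htn⟩ => ?_
  have htelescope : ∑ i ∈ Finset.range n, (γ (t (i + 1)) - γ (t i)) = γ b - γ a := by
    rw [Finset.sum_range_sub (fun i => γ (t i)), htn, ht0]
  have heucl : ∑ i ∈ Finset.range n, ‖γ (t (i + 1)) - γ (t i)‖ ≤ ‖γ b - γ a‖ + Δ := by
    have := (le_iSup₂ (f := fun n (t : {t : ℕ → ℝ // Monotone t ∧ t 0 = a ∧ t n = b}) =>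
        ∑ i ∈ Finset.range n, ENNReal.ofReal ‖γ (t.1 (i + 1)) - γ (t.1 i)‖)
      n ⟨t, ht, ht0, htn⟩).trans hlen
    rw [← ENNReal.ofReal_sum_of_nonneg fun i _ => norm_nonneg _] at this
    exact (ENNReal.ofReal_le_ofReal_iff (by positivity)).mp this
  rw [← ENNReal.ofReal_sum_of_nonneg fun i _ => apply_nonneg p _, ← htelescope]
  exact ENNReal.ofReal_le_ofReal (p.sum_le_add_of_sum_norm_le hC0 hC _ _ (htelescope ▸ heucl))

theorem Seminorm.exists_lenWith_le_of_lenWith_norm_le (p : Seminorm ℝ (EuclideanSpace ℝ (Fin d)))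
    (x y : EuclideanSpace ℝ (Fin d)) {δ : ℝ} (hδ : 0 < δ) :
    ∃ δ' > 0, ∀ (a b : ℝ) (γ : ℝ → EuclideanSpace ℝ (Fin d)), γ a = x → γ b = y →
      lenWith (fun v => ‖v‖) γ a b ≤ ENNReal.ofReal (‖y - x‖ + δ') →
      lenWith p γ a b ≤ ENNReal.ofReal (p (y - x) + δ) := by
  obtain ⟨C, hC0, hC⟩ := p.bound_of_continuous_normedSpace p.convexOn.locallyLipschitz.continuous
  have herror : Continuous fun Δ : ℝ => C * (2 * Δ + √(2 * (‖y - x‖ + Δ) * Δ)) := by fun_prop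
  have hsmall : ∀ᶠ Δ in 𝓝[>] 0, C * (2 * Δ + √(2 * (‖y - x‖ + Δ) * Δ)) < δ :=
    nhdsWithin_le_nhds ((herror.tendsto' 0 0 (by simp)).eventually (gt_mem_nhds hδ))
  obtain ⟨Δ, hΔδ, hΔ⟩ := (hsmall.and self_mem_nhdsWithin).exists
  refine ⟨Δ, hΔ, fun a b γ ha hb hlen => ?_⟩
  subst ha hb
  exact (lenWith_le_of_lenWith_norm_le p hC0.le hC hΔ.le hlen).trans
    (ENNReal.ofReal_le_ofReal (by linarith))

end Paths

theorem permeable_of_euclidean_permeable_general {d : ℕ}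
    (N : EuclideanSpace ℝ (Fin d) → ℝ)
    (hNsmul : ∀ (c : ℝ) (x), N (c • x) = |c| * N x)
    (hNadd : ∀ x y, N (x + y) ≤ N x + N y)
    (Θ : Set (EuclideanSpace ℝ (Fin d))) :
    (PermeableWith (fun v => ‖v‖) Θ → PermeableWith N Θ) ∧
    (FinitelyPermeableWith (fun v => ‖v‖) Θ → FinitelyPermeableWith N Θ) ∧
    (NullPermeableWith (fun v => ‖v‖) Θ → NullPermeableWith N Θ) := by
  let p : Seminorm ℝ (EuclideanSpace ℝ (Fin d)) := .of N hNadd hNsmul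
  refine ⟨?_, ?_, ?_⟩ <;>
  · intro H x y δ hδ
    obtain ⟨δ', hδ', htransfer⟩ := p.exists_lenWith_le_of_lenWith_norm_le x y hδ
    obtain ⟨a, b, γ, hab, hγ, ha, hb, hlen, hΘ⟩ := H x y δ' hδ'
    exact ⟨a, b, γ, hab, hγ, ha, hb, htransfer a b γ ha hb hlen, hΘ⟩

/-- If `Θ ⊆ ℝ^d` is permeable w.r.t. the Euclidean norm, then it is permeable w.r.t. any
norm `N` on `ℝ^d`; the same holds for finite permeability and null permeability. -/
theorem permeable_of_euclidean_permeable {d : ℕ}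
    (N : EuclideanSpace ℝ (Fin d) → ℝ)
    (hN0 : ∀ x, N x = 0 ↔ x = 0)
    (hNsmul : ∀ (c : ℝ) (x), N (c • x) = |c| * N x)
    (hNadd : ∀ x y, N (x + y) ≤ N x + N y)
    (Θ : Set (EuclideanSpace ℝ (Fin d))) :
    (PermeableWith (fun v => ‖v‖) Θ → PermeableWith N Θ) ∧
    (FinitelyPermeableWith (fun v => ‖v‖) Θ → FinitelyPermeableWith N Θ) ∧
    (NullPermeableWith (fun v => ‖v‖) Θ → NullPermeableWith N Θ) :=
  permeable_of_euclidean_permeable_general N hNsmul hNadd Θ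
end

section
/- Let ‖·‖ be a norm on ℝ^d with associated path length ℓ̂ (total variation with respect to ‖·‖). Fix z ∈ ℝ^d with z ≠ 0, and for every n ∈ ℕ let γ_n be a path in ℝ^d connecting 0 and z. Consider: (1) for each ε > 0 there is N ∈ ℕ such that for all n ≥ N and every polygonal approximation Z of γ_n (the polygonal chain through γ_n(t₀), …, γ_n(t_N) for a partition of the parameter interval), the sum of ℓ̂(s) over those segments s of Z whose angle with the segment from 0 to z exceeds ε is less than ε; (2) lim_{n→∞} ℓ̂(γ_n) = ‖z‖. Then (1) implies (2) for any norm ‖·‖, and (2) implies (1) whenever the closed unit ball of ‖·‖ is strictly convex. -/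
open Set
open scoped ENNReal Classical

/-- Condition (1) of the lemma: for every `ε > 0`, eventually in `n`, every polygonal
approximation of `γ_n` has total `N`-length less than `ε` along the segments making an
angle greater than `ε` with the segment from `0` to `z`. -/
def SmallBadAngleLength {d : ℕ} (N : EuclideanSpace ℝ (Fin d) → ℝ)
    (z : EuclideanSpace ℝ (Fin d)) (a b : ℕ → ℝ)
    (γ : ℕ → ℝ → EuclideanSpace ℝ (Fin d)) : Prop :=
  ∀ ε : ℝ, 0 < ε → ∃ N₀ : ℕ, ∀ n ≥ N₀, ∀ (k : ℕ) (t : ℕ → ℝ),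
    Monotone t → t 0 = a n → t k = b n →
    ∑ i ∈ (Finset.range k).filter
        (fun i => ε < InnerProductGeometry.angle (γ n (t (i + 1)) - γ n (t i)) z),
      N (γ n (t (i + 1)) - γ n (t i)) < ε

/-!
Write `N` for the norm, `C, c` for the constants with `c‖x‖ ≤ N x ≤ C‖x‖`, and split the
increments `v_i` of a polygonal approximation, which add up to `z`, into bad ones (angle with `z`
greater than `ε`) and good ones.

(1) ⇒ (2): a good increment satisfies `N v ≤ ‖v‖ (N z / ‖z‖ + C ε)`, since `v` lies within
`‖v‖ ε` of the vector of the same length on the ray of `z`, and `cos ε ‖v‖ ‖z‖ ≤ ⟪v, z⟫`.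
Summing, and using `∑ ⟪v_i, z⟫ = ‖z‖²` with the bad increments of total length `≤ ε / c`, every
polygonal length is at most `N z + O(ε)`.

(2) ⇒ (1): by Hahn–Banach there is a linear `g ≤ N` with `g z = N z`. Strict convexity of the
unit ball means `g x = N x` only on the ray of `z`, so by compactness `N - g ≥ δ ‖·‖` on the
vectors making an angle `≥ ε` with `z`. Since `∑ g v_i = N z`, every polygonal length is at
least `N z + (δ / C) · (N-length of the bad increments)`.
-/

open Filter Topology InnerProductGeometry Real Finset
open scoped RealInnerProductSpace

section Cone
variable {E : Type*} [NormedAddCommGroup E] [NormedSpace ℝ E]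

theorem exists_pos_mul_norm_le_of_isClosed_cone [ProperSpace E] {f : E → ℝ} (hf : Continuous f)
    (hhom : ∀ r : ℝ, 0 < r → ∀ x, f (r • x) = r * f x) {K : Set E} (hK : IsClosed K)
    (hKcone : ∀ r : ℝ, 0 < r → ∀ x ∈ K, r • x ∈ K) (hpos : ∀ x ∈ K, x ≠ 0 → 0 < f x) :
    ∃ δ, 0 < δ ∧ ∀ x ∈ K, δ * ‖x‖ ≤ f x := by
  have hS : IsCompact (Metric.sphere (0 : E) 1 ∩ K) := (isCompact_sphere 0 1).inter_right hK
  obtain ⟨δ, hδ, hδS⟩ := hS.exists_forall_le' hf.continuousOn fun x hx =>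
    hpos x hx.2 (ne_zero_of_mem_unit_sphere ⟨x, hx.1⟩)
  refine ⟨δ, hδ, fun x hx => ?_⟩
  rcases eq_or_ne x 0 with rfl | hx0
  · have h2 := hhom 2 two_pos 0
    rw [smul_zero] at h2
    simp only [norm_zero, mul_zero]
    linarith
  have hn : 0 < ‖x‖ := norm_pos_iff.2 hx0
  have := hδS (‖x‖⁻¹ • x) ⟨by simp [norm_smul, hn.ne'], hKcone _ (inv_pos.2 hn) x hx⟩
  rw [hhom _ (inv_pos.2 hn)] at this
  rwa [le_inv_mul_iff₀ hn, mul_comm] at this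

end Cone

namespace Seminorm
variable {E : Type*} [NormedAddCommGroup E] [NormedSpace ℝ E] (p : Seminorm ℝ E)

theorem exists_linearMap_apply_eq_and_le (z : E) :
    ∃ g : E →ₗ[ℝ] ℝ, g z = p z ∧ ∀ x, g x ≤ p x := by
  have H : ∀ c : ℝ, c • z = 0 → RingHom.id ℝ c • p z = 0 := fun c hc => by
    rcases smul_eq_zero.1 hc with rfl | rfl <;> simp
  let f : E →ₗ.[ℝ] ℝ := LinearPMap.mkSpanSingleton' z (p z) H
  have hf : ∀ x : f.domain, f x ≤ p x := by
    rintro ⟨x, hx⟩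
    obtain ⟨c, rfl⟩ := Submodule.mem_span_singleton.1 hx
    rw [LinearPMap.mkSpanSingleton'_apply, map_smul_eq_mul, smul_eq_mul, Real.norm_eq_abs]
    exact mul_le_mul_of_nonneg_right (le_abs_self c) (apply_nonneg p z)
  obtain ⟨g, hgf, hg⟩ := exists_extension_of_le_sublinear f p
    (fun c hc x => by rw [map_smul_eq_mul, Real.norm_of_nonneg hc.le]) (map_add_le_add p) hf
  exact ⟨g, (hgf ⟨z, Submodule.mem_span_singleton_self z⟩).trans
    (LinearPMap.mkSpanSingleton'_apply_self _ _ _ _), hg⟩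

theorem inv_smul_eq_of_apply_eq (hp : ∀ x, p x = 0 → x = 0)
    (hSC : ∀ x y, p x = 1 → p y = 1 → x ≠ y → p ((2 : ℝ)⁻¹ • (x + y)) < 1)
    {g : E →ₗ[ℝ] ℝ} (hg : ∀ x, g x ≤ p x) {x y : E} (hx : x ≠ 0) (hy : y ≠ 0)
    (hgx : g x = p x) (hgy : g y = p y) : (p x)⁻¹ • x = (p y)⁻¹ • y := by
  have unit : ∀ w, w ≠ 0 → g w = p w → p ((p w)⁻¹ • w) = 1 ∧ g ((p w)⁻¹ • w) = 1 := by
    intro w hw hgw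
    have hpw : p w ≠ 0 := mt (hp w) hw
    rw [map_smul_eq_mul, norm_inv, Real.norm_of_nonneg (apply_nonneg p w), map_smul, smul_eq_mul,
      hgw, inv_mul_cancel₀ hpw]
    exact ⟨rfl, rfl⟩
  obtain ⟨hpx, hgx'⟩ := unit x hx hgx
  obtain ⟨hpy, hgy'⟩ := unit y hy hgy
  by_contra hne
  have hmid : g ((2 : ℝ)⁻¹ • ((p x)⁻¹ • x + (p y)⁻¹ • y)) = 1 := by
    rw [map_smul, map_add, hgx', hgy']
    norm_num
  linarith [hSC _ _ hpx hpy hne, hg ((2 : ℝ)⁻¹ • ((p x)⁻¹ • x + (p y)⁻¹ • y))]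

variable [FiniteDimensional ℝ E]

theorem continuous_of_finiteDimensional : Continuous p :=
  p.convexOn.locallyLipschitz.continuous

theorem exists_le_mul_norm : ∃ C, 0 < C ∧ ∀ x, p x ≤ C * ‖x‖ :=
  p.bound_of_continuous_normedSpace p.continuous_of_finiteDimensional

theorem exists_mul_norm_le (hp : ∀ x, p x = 0 → x = 0) : ∃ c, 0 < c ∧ ∀ x, c * ‖x‖ ≤ p x := by
  obtain ⟨c, hc, h⟩ := exists_pos_mul_norm_le_of_isClosed_cone p.continuous_of_finiteDimensional
    (fun r hr x => by rw [map_smul_eq_mul, Real.norm_of_nonneg hr.le]) isClosed_univ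
    (fun _ _ _ _ => mem_univ _) fun x _ hx => (apply_nonneg p x).lt_of_ne' (mt (hp x) hx)
  exact ⟨c, hc, fun x => h x (mem_univ x)⟩

end Seminorm

section Angle
variable {E : Type*} [NormedAddCommGroup E] [InnerProductSpace ℝ E]

theorem cos_mul_norm_mul_norm_le_inner_of_angle_le {v z : E} {ε : ℝ} (h : angle v z ≤ ε)
    (hε : ε ≤ π) : cos ε * (‖v‖ * ‖z‖) ≤ ⟪v, z⟫ := by
  rw [← cos_angle_mul_norm_mul_norm]
  gcongr
  exact cos_le_cos_of_nonneg_of_le_pi (angle_nonneg v z) hε h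

theorem inner_le_cos_mul_norm_mul_norm_of_le_angle {v z : E} {ε : ℝ} (h : ε ≤ angle v z)
    (hε : 0 ≤ ε) : ⟪v, z⟫ ≤ cos ε * (‖v‖ * ‖z‖) := by
  rw [← cos_angle_mul_norm_mul_norm]
  gcongr
  exact cos_le_cos_of_nonneg_of_le_pi hε (angle_le_pi v z) h

theorem norm_sub_le_norm_mul_angle {x y : E} (h : ‖x‖ = ‖y‖) : ‖x - y‖ ≤ ‖x‖ * angle x y := by
  have hsq : ‖x - y‖ ^ 2 ≤ (‖x‖ * angle x y) ^ 2 := by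
    rw [norm_sub_sq_real, ← cos_angle_mul_norm_mul_norm, ← h]
    nlinarith [one_sub_sq_div_two_le_cos (x := angle x y), sq_nonneg ‖x‖]
  exact (pow_le_pow_iff_left₀ (norm_nonneg _) (mul_nonneg (norm_nonneg _) (angle_nonneg x y))
    two_ne_zero).1 hsq

theorem cos_mul_sum_norm_le {ι : Type*} (s : Finset ι) (v : ι → E) {z : E} (hz : z ≠ 0)
    (hsum : ∑ i ∈ s, v i = z) {ε : ℝ} (hε : ε ≤ π) :
    cos ε * ∑ i ∈ s with ¬ ε < angle (v i) z, ‖v i‖ ≤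
      ‖z‖ + ∑ i ∈ s with ε < angle (v i) z, ‖v i‖ := by
  refine le_of_mul_le_mul_left ?_ (norm_pos_iff.2 hz)
  calc ‖z‖ * (cos ε * ∑ i ∈ s with ¬ ε < angle (v i) z, ‖v i‖)
      = ∑ i ∈ s with ¬ ε < angle (v i) z, cos ε * (‖v i‖ * ‖z‖) := by
        rw [mul_sum, mul_sum]
        exact sum_congr rfl fun i _ => by ring
    _ ≤ ∑ i ∈ s with ¬ ε < angle (v i) z, ⟪v i, z⟫ :=
        sum_le_sum fun i hi =>
          cos_mul_norm_mul_norm_le_inner_of_angle_le (not_lt.1 (mem_filter.1 hi).2) hε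
    _ = ‖z‖ ^ 2 - ∑ i ∈ s with ε < angle (v i) z, ⟪v i, z⟫ := by
        have htotal : ∑ i ∈ s, ⟪v i, z⟫ = ‖z‖ ^ 2 := by
          rw [← sum_inner, hsum, real_inner_self_eq_norm_sq]
        rw [← htotal, ← sum_filter_add_sum_filter_not s (fun i => ε < angle (v i) z)]
        ring
    _ ≤ ‖z‖ ^ 2 + ∑ i ∈ s with ε < angle (v i) z, ‖v i‖ * ‖z‖ := by
        rw [sub_eq_add_neg, ← sum_neg_distrib]
        gcongr with i
        exact (neg_le_abs _).trans (abs_real_inner_le_norm _ _)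
    _ = ‖z‖ * (‖z‖ + ∑ i ∈ s with ε < angle (v i) z, ‖v i‖) := by
        rw [← sum_mul]
        ring

end Angle

namespace Seminorm
variable {E : Type*} [NormedAddCommGroup E] [InnerProductSpace ℝ E] (p : Seminorm ℝ E)

theorem apply_le_norm_mul_add_mul_angle {C : ℝ} (hC0 : 0 ≤ C) (hC : ∀ x, p x ≤ C * ‖x‖)
    {v z : E} (hz : z ≠ 0) : p v ≤ ‖v‖ * (p z / ‖z‖ + C * angle v z) := by
  rcases eq_or_ne v 0 with rfl | hv
  · simp
  have hs : 0 < ‖v‖ / ‖z‖ := div_pos (norm_pos_iff.2 hv) (norm_pos_iff.2 hz)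
  have hnorm : ‖v‖ = ‖(‖v‖ / ‖z‖) • z‖ := by
    rw [norm_smul, Real.norm_of_nonneg hs.le, div_mul_cancel₀ _ (norm_ne_zero_iff.2 hz)]
  have hchord : ‖v - (‖v‖ / ‖z‖) • z‖ ≤ ‖v‖ * angle v z := by
    simpa only [angle_smul_right_of_pos _ _ hs] using norm_sub_le_norm_mul_angle hnorm
  calc p v ≤ p ((‖v‖ / ‖z‖) • z) + p (v - (‖v‖ / ‖z‖) • z) := by
        simpa using map_add_le_add p ((‖v‖ / ‖z‖) • z) (v - (‖v‖ / ‖z‖) • z)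
    _ ≤ ‖v‖ / ‖z‖ * p z + C * (‖v‖ * angle v z) := by
        rw [map_smul_eq_mul, Real.norm_of_nonneg hs.le]
        gcongr
        exact (hC _).trans (mul_le_mul_of_nonneg_left hchord hC0)
    _ = ‖v‖ * (p z / ‖z‖ + C * angle v z) := by ring

theorem sum_le_of_sum_filter_lt_angle_le {C c : ℝ} (hC0 : 0 ≤ C) (hC : ∀ x, p x ≤ C * ‖x‖)
    (hc0 : 0 < c) (hc : ∀ x, c * ‖x‖ ≤ p x) {ι : Type*} (s : Finset ι) (v : ι → E) {z : E}
    (hz : z ≠ 0) (hsum : ∑ i ∈ s, v i = z) {ε : ℝ} (hε0 : 0 ≤ ε) (hε : ε < π / 2)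
    (hbad : ∑ i ∈ s with ε < angle (v i) z, p (v i) ≤ ε) :
    ∑ i ∈ s, p (v i) ≤ ε + (p z / ‖z‖ + C * ε) * (‖z‖ + ε / c) / cos ε := by
  have hA : 0 ≤ p z / ‖z‖ + C * ε := by have := apply_nonneg p z; positivity
  have hcos : 0 < cos ε := cos_pos_of_mem_Ioo ⟨by linarith [pi_pos], hε⟩
  have hbad_norm : ∑ i ∈ s with ε < angle (v i) z, ‖v i‖ ≤ ε / c := by
    rw [le_div_iff₀ hc0, sum_mul]
    exact (sum_le_sum fun i _ => by linarith [hc (v i)]).trans hbad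
  have hgood_norm : ∑ i ∈ s with ¬ ε < angle (v i) z, ‖v i‖ ≤ (‖z‖ + ε / c) / cos ε := by
    rw [le_div_iff₀ hcos, mul_comm]
    linarith [cos_mul_sum_norm_le s v hz hsum (by linarith [pi_pos] : ε ≤ π)]
  have hgood : ∑ i ∈ s with ¬ ε < angle (v i) z, p (v i) ≤
      (p z / ‖z‖ + C * ε) * ∑ i ∈ s with ¬ ε < angle (v i) z, ‖v i‖ := by
    rw [mul_sum]
    refine sum_le_sum fun i hi => (p.apply_le_norm_mul_add_mul_angle hC0 hC hz).trans ?_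
    rw [mul_comm]
    gcongr
    exact not_lt.1 (mem_filter.1 hi).2
  rw [← sum_filter_add_sum_filter_not s (fun i => ε < angle (v i) z)]
  calc _ ≤ ε + (p z / ‖z‖ + C * ε) * ((‖z‖ + ε / c) / cos ε) :=
        add_le_add hbad (hgood.trans (mul_le_mul_of_nonneg_left hgood_norm hA))
    _ = _ := by ring

theorem add_mul_sum_norm_filter_le_sum {g : E →ₗ[ℝ] ℝ} {z : E} (hgz : g z = p z)
    (hg : ∀ x, g x ≤ p x) {δ ε : ℝ} (hgap : ∀ v, ε < angle v z → δ * ‖v‖ ≤ p v - g v)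
    {ι : Type*} (s : Finset ι) (v : ι → E) (hsum : ∑ i ∈ s, v i = z) :
    p z + δ * ∑ i ∈ s with ε < angle (v i) z, ‖v i‖ ≤ ∑ i ∈ s, p (v i) := by
  have hexcess : ∑ i ∈ s, (p (v i) - g (v i)) = ∑ i ∈ s, p (v i) - p z := by
    rw [sum_sub_distrib, ← map_sum g, hsum, hgz]
  calc p z + δ * ∑ i ∈ s with ε < angle (v i) z, ‖v i‖
      ≤ p z + ∑ i ∈ s with ε < angle (v i) z, (p (v i) - g (v i)) := by
        rw [mul_sum]
        gcongr with i hi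
        exact hgap _ (mem_filter.1 hi).2
    _ ≤ p z + ∑ i ∈ s, (p (v i) - g (v i)) := by
        gcongr
        · exact fun i _ _ => sub_nonneg.2 (hg _)
        · exact filter_subset _ _
    _ = ∑ i ∈ s, p (v i) := by rw [hexcess]; ring

variable [FiniteDimensional ℝ E]

theorem exists_pos_mul_norm_le_sub_of_lt_angle (hp : ∀ x, p x = 0 → x = 0)
    (hSC : ∀ x y, p x = 1 → p y = 1 → x ≠ y → p ((2 : ℝ)⁻¹ • (x + y)) < 1)
    {z : E} (hz : z ≠ 0) {g : E →ₗ[ℝ] ℝ} (hgz : g z = p z) (hg : ∀ x, g x ≤ p x)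
    {ε : ℝ} (hε : 0 < ε) : ∃ δ, 0 < δ ∧ ∀ v, ε < angle v z → δ * ‖v‖ ≤ p v - g v := by
  rcases le_or_gt π ε with hπ | hπ
  · exact ⟨1, one_pos, fun v hv => absurd (angle_le_pi v z) (not_le.2 (hπ.trans_lt hv))⟩
  have hp_pos : ∀ w, w ≠ 0 → 0 < p w := fun w hw => (apply_nonneg p w).lt_of_ne' (mt (hp w) hw)
  have hpos : ∀ x ∈ {v | ⟪v, z⟫ ≤ cos ε * (‖v‖ * ‖z‖)}, x ≠ 0 → 0 < p x - g x := by
    intro x hx hx0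
    refine sub_pos.2 ((hg x).lt_of_ne fun hgx => ?_)
    have hray : x = (p x * (p z)⁻¹) • z := by
      rw [mul_smul, ← p.inv_smul_eq_of_apply_eq hp hSC hg hx0 hz hgx hgz,
        smul_inv_smul₀ (hp_pos x hx0).ne']
    have hangle : angle x z = 0 := by
      rw [hray, angle_smul_left_of_pos _ _ (mul_pos (hp_pos x hx0) (inv_pos.2 (hp_pos z hz))),
        angle_self hz]
    have hcos : cos ε < 1 := by
      simpa using cos_lt_cos_of_nonneg_of_le_pi le_rfl hπ.le hε
    have hxz : 0 < ‖x‖ * ‖z‖ := mul_pos (norm_pos_iff.2 hx0) (norm_pos_iff.2 hz)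
    rw [mem_ofPred_eq, ← cos_angle_mul_norm_mul_norm, hangle, cos_zero] at hx
    nlinarith
  -- `{v | ε ≤ angle v z}` is not closed at `0`, so the cone is described by the inner product.
  obtain ⟨δ, hδ, h⟩ := exists_pos_mul_norm_le_of_isClosed_cone (f := fun v => p v - g v)
    (K := {v | ⟪v, z⟫ ≤ cos ε * (‖v‖ * ‖z‖)})
    (p.continuous_of_finiteDimensional.sub g.continuous_of_finiteDimensional)
    (fun r hr x => by
      simp only [map_smul_eq_mul, map_smul, smul_eq_mul, Real.norm_of_nonneg hr.le]; ring)
    (isClosed_le (by fun_prop) (by fun_prop))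
    (fun r hr x hx => by
      simp only [mem_ofPred_eq, real_inner_smul_left, norm_smul,
        Real.norm_of_nonneg hr.le] at hx ⊢
      nlinarith) hpos
  exact ⟨δ, hδ, fun v hv => h v (inner_le_cos_mul_norm_mul_norm_of_le_angle hv.le hε.le)⟩

end Seminorm

theorem ENNReal.tendsto_ofReal_of_le_of_eventually_le {α : Type*} {l : Filter α} {u : α → ℝ≥0∞}
    {l' : Filter ℝ} [l'.NeBot] {F : ℝ → ℝ} {L : ℝ} (hF : Tendsto F l' (𝓝 L))
    (hlow : ∀ n, ENNReal.ofReal L ≤ u n)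
    (hup : ∀ᶠ ε in l', ∀ᶠ n in l, u n ≤ ENNReal.ofReal (F ε)) :
    Tendsto u l (𝓝 (ENNReal.ofReal L)) := by
  refine tendsto_order.2 ⟨fun a ha => Eventually.of_forall fun n => ha.trans_le (hlow n),
    fun b hb => ?_⟩
  have hFb : ∀ᶠ ε in l', ENNReal.ofReal (F ε) < b :=
    ((ENNReal.continuous_ofReal.tendsto L).comp hF).eventually_lt_const hb
  obtain ⟨ε, hε, hεb⟩ := (hup.and hFb).exists
  exact hε.mono fun n hn => hn.trans_lt hεb

section Length
variable {d : ℕ} (p : Seminorm ℝ (EuclideanSpace ℝ (Fin d)))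

theorem ofReal_sum_le_lenWith (γ : ℝ → EuclideanSpace ℝ (Fin d)) {a b : ℝ} {k : ℕ}
    {t : ℕ → ℝ} (ht : Monotone t) (ha : t 0 = a) (hb : t k = b) :
    ENNReal.ofReal (∑ i ∈ range k, p (γ (t (i + 1)) - γ (t i))) ≤ lenWith p γ a b := by
  rw [ENNReal.ofReal_sum_of_nonneg fun i _ => apply_nonneg p _]
  exact le_iSup_of_le k (le_iSup_of_le ⟨t, ht, ha, hb⟩ le_rfl)

theorem lenWith_le_ofReal (γ : ℝ → EuclideanSpace ℝ (Fin d)) {a b M : ℝ}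
    (h : ∀ (k : ℕ) (t : ℕ → ℝ), Monotone t → t 0 = a → t k = b →
      ∑ i ∈ range k, p (γ (t (i + 1)) - γ (t i)) ≤ M) :
    lenWith p γ a b ≤ ENNReal.ofReal M := by
  refine iSup₂_le fun k t => ?_
  rw [← ENNReal.ofReal_sum_of_nonneg fun i _ => apply_nonneg p _]
  exact ENNReal.ofReal_le_ofReal (h k t.1 t.2.1 t.2.2.1 t.2.2.2)

theorem ofReal_le_lenWith (γ : ℝ → EuclideanSpace ℝ (Fin d)) {a b : ℝ} (hab : a ≤ b) :
    ENNReal.ofReal (p (γ b - γ a)) ≤ lenWith p γ a b := by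
  have ht : Monotone fun i : ℕ => if i = 0 then a else b :=
    monotone_nat_of_le_succ fun i => by
      split_ifs <;> first | exact le_rfl | exact hab | contradiction
  simpa using ofReal_sum_le_lenWith p γ ht (k := 1) (by simp) (by simp)

variable {p} {z : EuclideanSpace ℝ (Fin d)} {a b : ℕ → ℝ} {γ : ℕ → ℝ → EuclideanSpace ℝ (Fin d)}

theorem sum_range_increments_eq (h0 : ∀ n, γ n (a n) = 0) (h1 : ∀ n, γ n (b n) = z) {n k : ℕ}
    {t : ℕ → ℝ} (ha : t 0 = a n) (hb : t k = b n) :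
    ∑ i ∈ range k, (γ n (t (i + 1)) - γ n (t i)) = z := by
  rw [sum_range_sub (fun i => γ n (t i)), ha, hb, h0, h1, sub_zero]

theorem tendsto_lenWith_of_smallBadAngleLength (hp : ∀ x, p x = 0 → x = 0) (hz : z ≠ 0)
    (hab : ∀ n, a n ≤ b n) (h0 : ∀ n, γ n (a n) = 0) (h1 : ∀ n, γ n (b n) = z)
    (hsmall : SmallBadAngleLength p z a b γ) :
    Tendsto (fun n => lenWith p (γ n) (a n) (b n)) atTop (𝓝 (ENNReal.ofReal (p z))) := by
  obtain ⟨C, hC0, hC⟩ := p.exists_le_mul_norm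
  obtain ⟨c, hc0, hc⟩ := p.exists_mul_norm_le hp
  have hF : Tendsto (fun ε => ε + (p z / ‖z‖ + C * ε) * (‖z‖ + ε / c) / cos ε) (𝓝[>] 0)
      (𝓝 (p z)) := by
    have hcont : ContinuousAt (fun ε => ε + (p z / ‖z‖ + C * ε) * (‖z‖ + ε / c) / cos ε) 0 := by
      fun_prop (disch := simp)
    convert hcont.tendsto.mono_left nhdsWithin_le_nhds using 2
    simp only [cos_zero, mul_zero, add_zero, zero_div, zero_add, div_one]
    rw [div_mul_cancel₀ _ (norm_ne_zero_iff.2 hz)]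
  refine ENNReal.tendsto_ofReal_of_le_of_eventually_le hF
    (fun n => by simpa [h0, h1] using ofReal_le_lenWith p (γ n) (hab n)) ?_
  filter_upwards [Ioo_mem_nhdsGT (half_pos pi_pos)] with ε hε
  obtain ⟨n₀, hn₀⟩ := hsmall ε hε.1
  filter_upwards [eventually_ge_atTop n₀] with n hn
  exact lenWith_le_ofReal p _ fun k t ht ha hb =>
    p.sum_le_of_sum_filter_lt_angle_le hC0.le hC hc0 hc (range k) _ hz
      (sum_range_increments_eq h0 h1 ha hb) hε.1.le hε.2 (hn₀ n hn k t ht ha hb).le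

theorem smallBadAngleLength_of_tendsto (hp : ∀ x, p x = 0 → x = 0)
    (hSC : ∀ x y, p x = 1 → p y = 1 → x ≠ y → p ((2 : ℝ)⁻¹ • (x + y)) < 1) (hz : z ≠ 0)
    (h0 : ∀ n, γ n (a n) = 0) (h1 : ∀ n, γ n (b n) = z)
    (hlim : Tendsto (fun n => lenWith p (γ n) (a n) (b n)) atTop (𝓝 (ENNReal.ofReal (p z)))) :
    SmallBadAngleLength p z a b γ := by
  intro ε hε
  obtain ⟨C, hC0, hC⟩ := p.exists_le_mul_norm
  obtain ⟨g, hgz, hg⟩ := p.exists_linearMap_apply_eq_and_le z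
  obtain ⟨δ, hδ, hgap⟩ := p.exists_pos_mul_norm_le_sub_of_lt_angle hp hSC hz hgz hg hε
  have hlt : ENNReal.ofReal (p z) < ENNReal.ofReal (p z + δ * (ε / C)) :=
    (ENNReal.ofReal_lt_ofReal_iff (by positivity)).2 (lt_add_of_pos_right _ (by positivity))
  obtain ⟨n₀, hn₀⟩ := eventually_atTop.1 (hlim.eventually_lt_const hlt)
  refine ⟨n₀, fun n hn k t ht ha hb => ?_⟩
  by_contra! hbad
  have hbad_norm : ε / C ≤ ∑ i ∈ range k with ε < angle (γ n (t (i + 1)) - γ n (t i)) z,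
      ‖γ n (t (i + 1)) - γ n (t i)‖ := by
    rw [div_le_iff₀ hC0, sum_mul]
    exact hbad.trans (sum_le_sum fun i _ => by rw [mul_comm]; exact hC _)
  have hsum := p.add_mul_sum_norm_filter_le_sum hgz hg hgap (range k) _
    (sum_range_increments_eq h0 h1 ha hb)
  refine (hn₀ n hn).not_ge
    ((ENNReal.ofReal_le_ofReal ?_).trans (ofReal_sum_le_lenWith p _ ht ha hb))
  linarith [mul_le_mul_of_nonneg_left hbad_norm hδ.le]

end Length

theorem polygonal_angle_length_criterion_general {d : ℕ}
    (N : EuclideanSpace ℝ (Fin d) → ℝ)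
    (hN0 : ∀ x, N x = 0 ↔ x = 0)
    (hNsmul : ∀ (c : ℝ) (x), N (c • x) = |c| * N x)
    (hNadd : ∀ x y, N (x + y) ≤ N x + N y)
    (z : EuclideanSpace ℝ (Fin d)) (hz : z ≠ 0)
    (a b : ℕ → ℝ) (hab : ∀ n, a n < b n)
    (γ : ℕ → ℝ → EuclideanSpace ℝ (Fin d))
    (h0 : ∀ n, γ n (a n) = 0) (h1 : ∀ n, γ n (b n) = z) :
    (SmallBadAngleLength N z a b γ →
      Filter.Tendsto (fun n => lenWith N (γ n) (a n) (b n)) Filter.atTop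
        (nhds (ENNReal.ofReal (N z)))) ∧
    ((∀ x y, N x = 1 → N y = 1 → x ≠ y → N ((2 : ℝ)⁻¹ • (x + y)) < 1) →
      Filter.Tendsto (fun n => lenWith N (γ n) (a n) (b n)) Filter.atTop
        (nhds (ENNReal.ofReal (N z))) →
      SmallBadAngleLength N z a b γ) := by
  obtain ⟨p, rfl⟩ : ∃ p : Seminorm ℝ (EuclideanSpace ℝ (Fin d)), ⇑p = N :=
    ⟨Seminorm.of N hNadd fun c x => by rw [hNsmul, Real.norm_eq_abs], rfl⟩
  have hp : ∀ x, p x = 0 → x = 0 := fun x => (hN0 x).1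
  exact ⟨tendsto_lenWith_of_smallBadAngleLength hp hz (fun n => (hab n).le) h0 h1,
    fun hSC => smallBadAngleLength_of_tendsto hp hSC hz h0 h1⟩

/-- For paths `γ_n` from `0` to `z ≠ 0`: condition (1) (polygonal approximations have small
total length along segments of large angle with `0z`) implies condition (2)
(`ℓ̂(γ_n) → N(z)`) for every norm `N`, and (2) implies (1) whenever the closed unit ball of
`N` is strictly convex. -/
theorem polygonal_angle_length_criterion {d : ℕ}
    (N : EuclideanSpace ℝ (Fin d) → ℝ)
    (hN0 : ∀ x, N x = 0 ↔ x = 0)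
    (hNsmul : ∀ (c : ℝ) (x), N (c • x) = |c| * N x)
    (hNadd : ∀ x y, N (x + y) ≤ N x + N y)
    (z : EuclideanSpace ℝ (Fin d)) (hz : z ≠ 0)
    (a b : ℕ → ℝ) (hab : ∀ n, a n < b n)
    (γ : ℕ → ℝ → EuclideanSpace ℝ (Fin d))
    (hcont : ∀ n, ContinuousOn (γ n) (Set.Icc (a n) (b n)))
    (h0 : ∀ n, γ n (a n) = 0) (h1 : ∀ n, γ n (b n) = z) :
    (SmallBadAngleLength N z a b γ →
      Filter.Tendsto (fun n => lenWith N (γ n) (a n) (b n)) Filter.atTop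
        (nhds (ENNReal.ofReal (N z)))) ∧
    ((∀ x y, N x = 1 → N y = 1 → x ≠ y → N ((2 : ℝ)⁻¹ • (x + y)) < 1) →
      Filter.Tendsto (fun n => lenWith N (γ n) (a n) (b n)) Filter.atTop
        (nhds (ENNReal.ofReal (N z))) →
      SmallBadAngleLength N z a b γ) :=
  polygonal_angle_length_criterion_general N hN0 hNsmul hNadd z hz a b hab γ h0 h1
end

section
/- Let Θ ⊆ ℝ^d have empty interior. Assume that for all x, y ∈ ℝ^d \ Θ and all δ > 0 there exists a path γ in ℝ^d connecting x and y with ℓ(γ) < ‖y − x‖ + δ and (image γ) ∩ Θ = ∅. Then Θ is null permeable. -/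
open Set
open scoped ENNReal

/-- The length (total variation w.r.t. the Euclidean norm) of a path `γ` over `[a,b]`,
as the supremum over partitions `a = t₀ ≤ t₁ ≤ … ≤ tₙ = b` of the sums of norms of
increments. -/
noncomputable def pathLen {d : ℕ} (γ : ℝ → EuclideanSpace ℝ (Fin d)) (a b : ℝ) : ℝ≥0∞ :=
  ⨆ n : ℕ, ⨆ t : {t : ℕ → ℝ // Monotone t ∧ t 0 = a ∧ t n = b},
    ∑ i ∈ Finset.range n, ENNReal.ofReal ‖γ (t.1 (i + 1)) - γ (t.1 i)‖

/-- A set `Θ ⊆ ℝ^d` is null permeable (w.r.t. the Euclidean norm) if any two points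
`x, y` can be joined, for every `δ > 0`, by a path of length at most `‖y - x‖ + δ`
whose image meets `Θ` at most in `{x, y}`. -/
def NullPermeable {d : ℕ} (Θ : Set (EuclideanSpace ℝ (Fin d))) : Prop :=
  ∀ x y : EuclideanSpace ℝ (Fin d), ∀ δ : ℝ, 0 < δ →
    ∃ (a b : ℝ) (γ : ℝ → EuclideanSpace ℝ (Fin d)),
      a < b ∧ ContinuousOn γ (Set.Icc a b) ∧ γ a = x ∧ γ b = y ∧
      pathLen γ a b ≤ ENNReal.ofReal (‖y - x‖ + δ) ∧
      γ '' Set.Icc a b ∩ Θ ⊆ {x, y}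

/-!
Since `Θᶜ` is dense, a point `x` is the limit of points `zₙ ∉ Θ` with `∑ ‖zₙ - x‖` as small as we
like. Joining `zₙ₊₁` to `zₙ` by a short path avoiding `Θ` and running it over `[2⁻ⁿ⁻¹, 2⁻ⁿ]`
gives a path from `x` of arbitrarily small length that leaves `Θ` at once. Doing the same at `y`
and joining the two far endpoints by a short path avoiding `Θ`, the triangle inequality bounds
the total length by `‖y - x‖ + δ`.
-/

open Filter Topology

theorem pathLen_eq_eVariationOn {d : ℕ} (γ : ℝ → EuclideanSpace ℝ (Fin d)) (a b : ℝ) :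
    pathLen γ a b = eVariationOn γ (Icc a b) := by
  have hterm (p q : EuclideanSpace ℝ (Fin d)) : ENNReal.ofReal ‖p - q‖ = edist p q := by
    rw [edist_dist, dist_eq_norm]
  simp only [pathLen, hterm]
  apply le_antisymm
  · refine iSup₂_le fun n ⟨t, ht, ht0, htn⟩ => ?_
    exact eVariationOn.sum_le_of_monotoneOn_Iic (ht.monotoneOn _)
      fun i hi => ⟨ht0 ▸ ht (Nat.zero_le i), htn ▸ ht hi⟩
  · refine iSup_le fun ⟨n, u, hu, hus⟩ => ?_
    let t : ℕ → ℝ := fun i => if i = 0 then a else if i ≤ n + 1 then u (i - 1) else b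
    have ht : Monotone t := by
      refine monotone_nat_of_le_succ fun i => ?_
      have := hus (i - 1); have := hus i; have := @hu (i - 1) i
      simp only [t, mem_Icc] at *
      split_ifs <;> grind
    refine le_iSup₂_of_le (n + 2) ⟨t, ht, rfl, by simp [t]⟩ ?_
    simp only [Finset.sum_range_succ _ (n + 1), Finset.sum_range_succ' _ n]
    refine le_add_right (le_add_right (le_of_eq (Finset.sum_congr rfl fun i hi => ?_)))
    simp [t, Finset.mem_range.mp hi, (Finset.mem_range.mp hi).le]

section Gluing

variable {E : Type*}

noncomputable def glueAt (b : ℝ) (f g : ℝ → E) : ℝ → E := fun t => if t ≤ b then f t else g t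

variable {f g : ℝ → E} {a b c : ℝ}

theorem glueAt_eqOn_left : EqOn (glueAt b f g) f (Iic b) := fun _ ht => if_pos ht

theorem glueAt_eqOn_right (h : f b = g b) : EqOn (glueAt b f g) g (Ici b) := fun t ht => by
  rcases (mem_Ici.1 ht).eq_or_lt with rfl | hbt
  · exact (if_pos le_rfl).trans h
  · exact if_neg hbt.not_ge

variable [PseudoEMetricSpace E]

theorem continuousOn_glueAt (hab : a ≤ b) (hbc : b ≤ c) (h : f b = g b)
    (hf : ContinuousOn f (Icc a b)) (hg : ContinuousOn g (Icc b c)) :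
    ContinuousOn (glueAt b f g) (Icc a c) := by
  rw [← Icc_union_Icc_eq_Icc hab hbc]
  exact (hf.congr (glueAt_eqOn_left.mono Icc_subset_Iic_self)).union_of_isClosed
    (hg.congr ((glueAt_eqOn_right h).mono Icc_subset_Ici_self)) isClosed_Icc isClosed_Icc

theorem eVariationOn_glueAt (hab : a ≤ b) (hbc : b ≤ c) (h : f b = g b) :
    eVariationOn (glueAt b f g) (Icc a c) =
      eVariationOn f (Icc a b) + eVariationOn g (Icc b c) := by
  have := eVariationOn.Icc_add_Icc (glueAt b f g) hab hbc (mem_univ b)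
  rw [univ_inter, univ_inter, univ_inter] at this
  rw [← this, eVariationOn.eq_of_eqOn (glueAt_eqOn_left.mono Icc_subset_Iic_self),
    eVariationOn.eq_of_eqOn ((glueAt_eqOn_right h).mono Icc_subset_Ici_self)]

end Gluing

section Reparametrization

variable {E : Type*} [PseudoEMetricSpace E] {f : ℝ → E} {a b : ℝ}

theorem exists_reparam_Icc (hab : a < b) (hf : ContinuousOn f (Icc a b)) {c d : ℝ} (hcd : c < d) :
    ∃ g : ℝ → E, ContinuousOn g (Icc c d) ∧ g c = f a ∧ g d = f b ∧
      g '' Icc c d = f '' Icc a b ∧ eVariationOn g (Icc c d) = eVariationOn f (Icc a b) := by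
  set k := (b - a) / (d - c)
  have hk : 0 < k := div_pos (sub_pos.2 hab) (sub_pos.2 hcd)
  have hφc : k * c + (a - k * c) = a := by ring
  have hφd : k * d + (a - k * c) = b := by
    simp only [k]; field_simp [(sub_pos.2 hcd).ne']; ring
  have himage : (k * · + (a - k * c)) '' Icc c d = Icc a b := by
    rw [image_affine_Icc' hk, hφc, hφd]
  refine ⟨f ∘ (k * · + (a - k * c)), hf.comp (by fun_prop) (himage ▸ mapsTo_image _ _),
    by simp [hφc], by simp [hφd], by rw [image_comp, himage], ?_⟩
  rw [eVariationOn.comp_eq_of_monotoneOn _ _ fun _ _ _ _ h => by gcongr, himage]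

theorem eVariationOn_comp_const_sub (f : ℝ → E) (a b c : ℝ) :
    eVariationOn (fun t => f (c - t)) (Icc (c - b) (c - a)) = eVariationOn f (Icc a b) := by
  rw [show (fun t => f (c - t)) = f ∘ (c - ·) from rfl,
    eVariationOn.comp_eq_of_antitoneOn _ _ (fun _ _ _ _ h => sub_le_sub_left h c),
    image_const_sub_Icc, sub_sub_cancel, sub_sub_cancel]

end Reparametrization

theorem eVariationOn_Ioc_le {α E : Type*} [LinearOrder α] [PseudoEMetricSpace E] {f : α → E}
    {a b : α} {C : ℝ≥0∞} (h : ∀ s ∈ Ioc a b, eVariationOn f (Icc s b) ≤ C) :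
    eVariationOn f (Ioc a b) ≤ C := by
  rw [eVariationOn.eq_biSup_inter_Icc]
  refine iSup₂_le fun p hp => le_trans (eVariationOn.mono f ?_) (h p.1 hp.1)
  exact fun t ht => ⟨ht.2.1, ht.1.2⟩

theorem StrictAnti.pos_of_tendsto_zero {u : ℕ → ℝ} (hu : StrictAnti u)
    (hu0 : Tendsto u atTop (𝓝 0)) (n : ℕ) : 0 < u n :=
  (hu.antitone.le_of_tendsto hu0 (n + 1)).trans_lt (hu n.lt_succ_self)

theorem exists_mem_Icc_of_tendsto_zero {u : ℕ → ℝ} (hu0 : Tendsto u atTop (𝓝 0)) {t : ℝ}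
    (ht : t ∈ Ioc 0 (u 0)) :
    ∃ n, t ∈ Icc (u (n + 1)) (u n) := by
  classical
  have hex : ∃ n, u n < t := (hu0.eventually (gt_mem_nhds ht.1)).exists
  obtain ⟨n, hn⟩ := Nat.exists_eq_add_one_of_ne_zero (n := Nat.find hex) fun h0 => by
    have := Nat.find_spec hex
    rw [h0] at this
    exact this.not_ge ht.2
  refine ⟨n, (hn ▸ Nat.find_spec hex).le, not_lt.1 (Nat.find_min hex (by omega))⟩

section Concatenation

variable {E : Type*}

open Classical in
noncomputable def concatPieces (u : ℕ → ℝ) (g : ℕ → ℝ → E) (x : E) (t : ℝ) : E :=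
  if h : ∃ n, t ∈ Icc (u (n + 1)) (u n) then g h.choose t else x

variable {u : ℕ → ℝ} {g : ℕ → ℝ → E} {x : E}

theorem concatPieces_eq (hu : StrictAnti u)
    (hmatch : ∀ n, g (n + 1) (u (n + 1)) = g n (u (n + 1))) {n : ℕ} {t : ℝ}
    (ht : t ∈ Icc (u (n + 1)) (u n)) : concatPieces u g x t = g n t := by
  -- two of the intervals overlap only if they are adjacent, and then only at the common endpoint
  have key : ∀ m n, m < n → t ∈ Icc (u (m + 1)) (u m) → t ∈ Icc (u (n + 1)) (u n) →
      g m t = g n t := by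
    intro m n hmn hm hn
    obtain rfl : n = m + 1 := hu.injective (le_antisymm (hu.antitone hmn) (hm.1.trans hn.2))
    obtain rfl : t = u (m + 1) := le_antisymm hn.2 hm.1
    exact (hmatch m).symm
  have h : ∃ m, t ∈ Icc (u (m + 1)) (u m) := ⟨n, ht⟩
  rw [concatPieces, dif_pos h]
  rcases lt_trichotomy h.choose n with hlt | heq | hgt
  · exact key _ _ hlt h.choose_spec ht
  · rw [heq]
  · exact (key _ _ hgt ht h.choose_spec).symm

theorem concatPieces_zero (hu : StrictAnti u) (hu0 : Tendsto u atTop (𝓝 0)) :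
    concatPieces u g x 0 = x := by
  rw [concatPieces, dif_neg]
  rintro ⟨n, hn, -⟩
  exact (hu.pos_of_tendsto_zero hu0 (n + 1)).not_ge hn

theorem mapsTo_concatPieces (hu : StrictAnti u) (hu0 : Tendsto u atTop (𝓝 0))
    (hmatch : ∀ n, g (n + 1) (u (n + 1)) = g n (u (n + 1))) {S : Set E}
    (hS : ∀ n, MapsTo (g n) (Icc (u (n + 1)) (u n)) S) :
    MapsTo (concatPieces u g x) (Ioc 0 (u 0)) S := fun _ ht =>
  let ⟨n, hn⟩ := exists_mem_Icc_of_tendsto_zero hu0 ht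
  concatPieces_eq hu hmatch hn ▸ hS n hn

variable [PseudoEMetricSpace E]

theorem continuousOn_concatPieces_Icc (hu : StrictAnti u)
    (hmatch : ∀ n, g (n + 1) (u (n + 1)) = g n (u (n + 1)))
    (hcont : ∀ n, ContinuousOn (g n) (Icc (u (n + 1)) (u n))) (n : ℕ) :
    ContinuousOn (concatPieces u g x) (Icc (u n) (u 0)) := by
  induction n with
  | zero => rw [Icc_self]; exact continuousOn_singleton _ _
  | succ n ih =>
    rw [← Icc_union_Icc_eq_Icc (hu.antitone n.le_succ) (hu.antitone n.zero_le)]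
    exact ((hcont n).congr fun t ht => concatPieces_eq hu hmatch ht).union_of_isClosed ih
      isClosed_Icc isClosed_Icc

theorem eVariationOn_concatPieces_Icc (hu : StrictAnti u)
    (hmatch : ∀ n, g (n + 1) (u (n + 1)) = g n (u (n + 1))) {m n : ℕ} (hmn : m ≤ n) :
    eVariationOn (concatPieces u g x) (Icc (u n) (u m)) =
      ∑ k ∈ Finset.Ico m n, eVariationOn (g k) (Icc (u (k + 1)) (u k)) := by
  induction n, hmn using Nat.le_induction with
  | base => simp
  | succ n hmn ih =>
    have := eVariationOn.Icc_add_Icc (concatPieces u g x) (hu.antitone n.le_succ)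
      (hu.antitone hmn) (mem_univ _)
    rw [univ_inter, univ_inter, univ_inter] at this
    rw [← this, Finset.sum_Ico_succ_top hmn, ← ih, add_comm,
      eVariationOn.eq_of_eqOn fun t ht => concatPieces_eq hu hmatch ht]

variable {r : ℕ → ℝ≥0∞}

theorem eVariationOn_concatPieces_le_tsum (hu : StrictAnti u) (hu0 : Tendsto u atTop (𝓝 0))
    (hmatch : ∀ n, g (n + 1) (u (n + 1)) = g n (u (n + 1)))
    (hr : ∀ n, eVariationOn (g n) (Icc (u (n + 1)) (u n)) ≤ r n) {m : ℕ} {s : ℝ}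
    (hs : s ∈ Ioc 0 (u m)) :
    eVariationOn (concatPieces u g x) (Icc s (u m)) ≤ ∑' k, r (k + m) := by
  obtain ⟨N, hNs, hmN⟩ :=
    ((hu0.eventually (gt_mem_nhds hs.1)).and (eventually_ge_atTop m)).exists
  calc eVariationOn (concatPieces u g x) (Icc s (u m))
      ≤ eVariationOn (concatPieces u g x) (Icc (u N) (u m)) :=
        eVariationOn.mono _ (Icc_subset_Icc_left hNs.le)
    _ ≤ ∑ k ∈ Finset.Ico m N, r k := by
        rw [eVariationOn_concatPieces_Icc hu hmatch hmN]; exact Finset.sum_le_sum fun k _ => hr k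
    _ = ∑ k ∈ Finset.range (N - m), r (k + m) := by
        rw [Finset.sum_Ico_eq_sum_range]; simp only [add_comm]
    _ ≤ ∑' k, r (k + m) := ENNReal.sum_le_tsum _

theorem continuousWithinAt_concatPieces_zero (hu : StrictAnti u) (hu0 : Tendsto u atTop (𝓝 0))
    (hmatch : ∀ n, g (n + 1) (u (n + 1)) = g n (u (n + 1)))
    (hr : ∀ n, eVariationOn (g n) (Icc (u (n + 1)) (u n)) ≤ r n) (hr_ne_top : ∑' n, r n ≠ ∞)
    (hx : Tendsto (fun n => g n (u n)) atTop (𝓝 x)) :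
    ContinuousWithinAt (concatPieces u g x) (Ici 0) 0 := by
  have hbound : Tendsto (fun m => ∑' k, r (k + m) + edist (g m (u m)) x) atTop (𝓝 0) := by
    simpa using (ENNReal.tendsto_sum_nat_add r hr_ne_top).add (tendsto_iff_edist_tendsto_0.1 hx)
  rw [ContinuousWithinAt, concatPieces_zero hu hu0, EMetric.tendsto_nhds]
  intro ε hε
  obtain ⟨m, hm⟩ := (hbound.eventually (gt_mem_nhds hε)).exists
  filter_upwards [Ico_mem_nhdsGE (hu.pos_of_tendsto_zero hu0 m)] with t ht
  rcases ht.1.eq_or_lt with rfl | ht0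
  · simpa [concatPieces_zero hu hu0] using hε
  calc edist (concatPieces u g x t) x
      ≤ edist (concatPieces u g x t) (concatPieces u g x (u m)) +
          edist (concatPieces u g x (u m)) x := edist_triangle _ _ _
    _ ≤ ∑' k, r (k + m) + edist (g m (u m)) x := by
        gcongr
        · exact (eVariationOn.edist_le _ (s := Icc t (u m)) ⟨le_rfl, ht.2.le⟩
            ⟨ht.2.le, le_rfl⟩).trans
              (eVariationOn_concatPieces_le_tsum hu hu0 hmatch hr ⟨ht0, ht.2.le⟩)
        · rw [concatPieces_eq hu hmatch ⟨(hu m.lt_succ_self).le, le_rfl⟩]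
    _ < ε := hm

theorem continuousOn_concatPieces (hu : StrictAnti u) (hu0 : Tendsto u atTop (𝓝 0))
    (hmatch : ∀ n, g (n + 1) (u (n + 1)) = g n (u (n + 1)))
    (hcont : ∀ n, ContinuousOn (g n) (Icc (u (n + 1)) (u n)))
    (hr : ∀ n, eVariationOn (g n) (Icc (u (n + 1)) (u n)) ≤ r n) (hr_ne_top : ∑' n, r n ≠ ∞)
    (hx : Tendsto (fun n => g n (u n)) atTop (𝓝 x)) :
    ContinuousOn (concatPieces u g x) (Icc 0 (u 0)) := by
  intro t ht
  rcases ht.1.eq_or_lt with rfl | ht0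
  · exact (continuousWithinAt_concatPieces_zero hu hu0 hmatch hr hr_ne_top hx).mono
      Icc_subset_Ici_self
  obtain ⟨n, hn⟩ := (hu0.eventually (gt_mem_nhds ht0)).exists
  have hnhds : Icc (u n) (u 0) ∈ 𝓝[Icc 0 (u 0)] t :=
    mem_nhdsWithin.2 ⟨Ioi (u n), isOpen_Ioi, hn, fun s hs => ⟨hs.1.le, hs.2.2⟩⟩
  exact (continuousOn_concatPieces_Icc hu hmatch hcont n t ⟨hn.le, ht.2⟩).mono_of_mem_nhdsWithin
    hnhds

theorem eVariationOn_concatPieces_le (hu : StrictAnti u) (hu0 : Tendsto u atTop (𝓝 0))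
    (hmatch : ∀ n, g (n + 1) (u (n + 1)) = g n (u (n + 1)))
    (hr : ∀ n, eVariationOn (g n) (Icc (u (n + 1)) (u n)) ≤ r n) (hr_ne_top : ∑' n, r n ≠ ∞)
    (hx : Tendsto (fun n => g n (u n)) atTop (𝓝 x)) :
    eVariationOn (concatPieces u g x) (Icc 0 (u 0)) ≤ ∑' n, r n := by
  rw [← eVariationOn.eVariationOn_Ioc_eq_Icc_of_continuousWithinAt
    (continuousWithinAt_concatPieces_zero hu hu0 hmatch hr hr_ne_top hx)]
  exact eVariationOn_Ioc_le fun s hs => by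
    simpa using eVariationOn_concatPieces_le_tsum (m := 0) hu hu0 hmatch hr hs

end Concatenation

section ShortPaths

variable {E : Type*} [PseudoEMetricSpace E]

def HasShortPaths (S : Set E) : Prop :=
  ∀ x ∈ S, ∀ y ∈ S, ∀ ε : ℝ≥0∞, ε ≠ 0 → ∀ a b : ℝ, a < b → ∃ γ : ℝ → E,
    ContinuousOn γ (Icc a b) ∧ γ a = x ∧ γ b = y ∧ MapsTo γ (Icc a b) S ∧
      eVariationOn γ (Icc a b) ≤ edist x y + ε

variable {S : Set E}

theorem exists_path_leaving_of_dense (hd : Dense S) (hS : HasShortPaths S) (x : E)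
    {ε : ℝ≥0∞} (hε : ε ≠ 0) :
    ∃ α : ℝ → E, ContinuousOn α (Icc 0 1) ∧ α 0 = x ∧ MapsTo α (Ioc 0 1) S ∧
      eVariationOn α (Icc 0 1) ≤ ε := by
  obtain ⟨η, hη0, hηε⟩ :=
    ENNReal.exists_pos_sum_of_countable' (ENNReal.div_pos hε (by norm_num : (3 : ℝ≥0∞) ≠ ∞)).ne' ℕ
  choose z hzS hxz using fun n => EMetric.mem_closure_iff.1 (hd x) (η n) (hη0 n)
  set u : ℕ → ℝ := fun n => 2⁻¹ ^ n
  have hu : StrictAnti u := pow_right_strictAnti₀ (by norm_num) (by norm_num)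
  have hu0 : Tendsto u atTop (𝓝 0) :=
    tendsto_pow_atTop_nhds_zero_of_lt_one (by norm_num) (by norm_num)
  choose g hg hgl hgr hgS hgvar using fun n => hS (z (n + 1)) (hzS _) (z n) (hzS _) (η n)
    (hη0 n).ne' (u (n + 1)) (u n) (hu n.lt_succ_self)
  have hmatch : ∀ n, g (n + 1) (u (n + 1)) = g n (u (n + 1)) :=
    fun n => (hgr (n + 1)).trans (hgl n).symm
  have hx : Tendsto (fun n => g n (u n)) atTop (𝓝 x) := by
    simp only [hgr, tendsto_iff_edist_tendsto_0]
    refine tendsto_of_tendsto_of_tendsto_of_le_of_le tendsto_const_nhds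
      (ENNReal.tendsto_atTop_zero_of_tsum_ne_top (ne_top_of_lt hηε)) (fun _ => zero_le)
      fun n => (edist_comm _ _).trans_le (hxz n).le
  have hr : ∀ n, eVariationOn (g n) (Icc (u (n + 1)) (u n)) ≤ η (n + 1) + 2 * η n := fun n =>
    calc eVariationOn (g n) (Icc (u (n + 1)) (u n))
        ≤ edist (z (n + 1)) (z n) + η n := hgvar n
      _ ≤ edist x (z (n + 1)) + edist x (z n) + η n := by
          gcongr; exact edist_triangle_left _ _ _
      _ ≤ η (n + 1) + 2 * η n := by
          rw [two_mul, ← add_assoc]; gcongr <;> exact (hxz _).le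
  have hsum : ∑' n, (η (n + 1) + 2 * η n) ≤ 3 * ∑' n, η n :=
    calc ∑' n, (η (n + 1) + 2 * η n) = ∑' n, η (n + 1) + 2 * ∑' n, η n := by
          rw [ENNReal.tsum_add, ENNReal.tsum_mul_left]
      _ ≤ ∑' n, η n + 2 * ∑' n, η n := by
          grw [ENNReal.tsum_comp_le_tsum_of_injective (add_left_injective 1) η]
      _ = 3 * ∑' n, η n := by ring
  have hsum_ne_top : ∑' n, (η (n + 1) + 2 * η n) ≠ ∞ :=
    ne_top_of_le_ne_top (ENNReal.mul_ne_top (by norm_num) (ne_top_of_lt hηε)) hsum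
  have hu1 : u 0 = 1 := pow_zero _
  refine ⟨concatPieces u g x, hu1 ▸ continuousOn_concatPieces hu hu0 hmatch hg hr hsum_ne_top hx,
    concatPieces_zero hu hu0, hu1 ▸ mapsTo_concatPieces hu hu0 hmatch hgS, ?_⟩
  calc eVariationOn (concatPieces u g x) (Icc 0 1)
      ≤ ∑' n, (η (n + 1) + 2 * η n) :=
        hu1 ▸ eVariationOn_concatPieces_le hu hu0 hmatch hr hsum_ne_top hx
    _ ≤ 3 * (ε / 3) := hsum.trans (by gcongr)
    _ = ε := ENNReal.mul_div_cancel (by norm_num) (by norm_num)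

theorem exists_short_path_of_dense (hd : Dense S) (hS : HasShortPaths S) (x y : E)
    {ε : ℝ≥0∞} (hε : ε ≠ 0) :
    ∃ γ : ℝ → E, ContinuousOn γ (Icc 0 3) ∧ γ 0 = x ∧ γ 3 = y ∧ MapsTo γ (Ioo 0 3) S ∧
      eVariationOn γ (Icc 0 3) ≤ edist x y + ε := by
  have hε5 : ε / 5 ≠ 0 := (ENNReal.div_pos hε (by norm_num)).ne'
  obtain ⟨α, hα, hα0, hαS, hαvar⟩ := exists_path_leaving_of_dense hd hS x hε5
  obtain ⟨β, hβ, hβ0, hβS, hβvar⟩ := exists_path_leaving_of_dense hd hS y hε5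
  obtain ⟨m, hm, hm1, hm2, hmS, hmvar⟩ := hS (α 1) (hαS ⟨one_pos, le_rfl⟩) (β 1)
    (hβS ⟨one_pos, le_rfl⟩) (ε / 5) hε5 1 2 one_lt_two
  set β' : ℝ → E := fun t => β (3 - t)
  have hβ' : ContinuousOn β' (Icc 2 3) :=
    hβ.comp (by fun_prop) fun t ht => ⟨by linarith [ht.2], by linarith [ht.1]⟩
  have hβ'var : eVariationOn β' (Icc 2 3) = eVariationOn β (Icc 0 1) := by
    have := eVariationOn_comp_const_sub β 0 1 3
    norm_num at this
    exact this
  have h1 : α 1 = m 1 := hm1.symm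
  have h2 : glueAt 1 α m 2 = β' 2 := by norm_num [glueAt, β', hm2]
  have hedist : edist (α 1) (β 1) ≤ ε / 5 + edist x y + ε / 5 :=
    calc edist (α 1) (β 1) ≤ edist (α 1) x + edist x y + edist y (β 1) := edist_triangle4 _ _ _ _
      _ ≤ ε / 5 + edist x y + ε / 5 := by
        gcongr
        · rw [← hα0, edist_comm]
          exact (eVariationOn.edist_le α (by norm_num) (by norm_num)).trans hαvar
        · rw [← hβ0]
          exact (eVariationOn.edist_le β (by norm_num) (by norm_num)).trans hβvar
  refine ⟨glueAt 2 (glueAt 1 α m) β', continuousOn_glueAt (by norm_num) (by norm_num) h2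
    (continuousOn_glueAt (by norm_num) (by norm_num) h1 hα hm) hβ', by simp [glueAt, hα0],
    by norm_num [glueAt, β', hβ0], ?_, ?_⟩
  · intro t ht
    simp only [glueAt]
    split_ifs with ht2 ht1
    · exact hαS ⟨ht.1, ht1⟩
    · exact hmS ⟨(not_le.1 ht1).le, ht2⟩
    · exact hβS ⟨by linarith [ht.2], by linarith [not_le.1 ht2]⟩
  · rw [eVariationOn_glueAt (by norm_num) (by norm_num) h2,
      eVariationOn_glueAt (by norm_num) (by norm_num) h1, hβ'var]
    calc eVariationOn α (Icc 0 1) + eVariationOn m (Icc 1 2) + eVariationOn β (Icc 0 1)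
        ≤ ε / 5 + (ε / 5 + edist x y + ε / 5 + ε / 5) + ε / 5 := by
          grw [hαvar, hmvar, hedist, hβvar]
      _ = edist x y + 5 * (ε / 5) := by ring
      _ = edist x y + ε := by rw [ENNReal.mul_div_cancel (by norm_num) (by norm_num)]

end ShortPaths

theorem hasShortPaths_compl {d : ℕ} {Θ : Set (EuclideanSpace ℝ (Fin d))}
    (h : ∀ x ∉ Θ, ∀ y ∉ Θ, ∀ δ : ℝ, 0 < δ →
      ∃ (a b : ℝ) (γ : ℝ → EuclideanSpace ℝ (Fin d)),
        a < b ∧ ContinuousOn γ (Set.Icc a b) ∧ γ a = x ∧ γ b = y ∧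
        pathLen γ a b < ENNReal.ofReal (‖y - x‖ + δ) ∧
        γ '' Set.Icc a b ∩ Θ = ∅) :
    HasShortPaths Θᶜ := by
  intro x hx y hy ε hε a b hab
  obtain ⟨δ, -, hδ, hδε⟩ := ENNReal.lt_iff_exists_real_btwn.1 (pos_iff_ne_zero.2 hε)
  rw [ENNReal.ofReal_pos] at hδ
  obtain ⟨a', b', γ, hab', hγ, hγa, hγb, hγlen, hγΘ⟩ := h x hx y hy δ hδ
  obtain ⟨g, hg, hga, hgb, hgγ, hgvar⟩ := exists_reparam_Icc hab' hγ hab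
  refine ⟨g, hg, hga.trans hγa, hgb.trans hγb, ?_, ?_⟩
  · rw [mapsTo_iff_image_subset, hgγ, subset_compl_iff_disjoint_right,
      disjoint_iff_inter_eq_empty, hγΘ]
  · rw [hgvar, ← pathLen_eq_eVariationOn, edist_comm, edist_dist, dist_eq_norm]
    refine hγlen.le.trans ?_
    rw [ENNReal.ofReal_add (norm_nonneg _) hδ.le]
    gcongr

/-- If `Θ` has empty interior and any two points of the complement of `Θ` can be joined by
short paths avoiding `Θ`, then `Θ` is null permeable. -/
theorem nullPermeable_of_paths_outside {d : ℕ} (Θ : Set (EuclideanSpace ℝ (Fin d)))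
    (hint : interior Θ = ∅)
    (h : ∀ x ∉ Θ, ∀ y ∉ Θ, ∀ δ : ℝ, 0 < δ →
      ∃ (a b : ℝ) (γ : ℝ → EuclideanSpace ℝ (Fin d)),
        a < b ∧ ContinuousOn γ (Set.Icc a b) ∧ γ a = x ∧ γ b = y ∧
        pathLen γ a b < ENNReal.ofReal (‖y - x‖ + δ) ∧
        γ '' Set.Icc a b ∩ Θ = ∅) :
    NullPermeable Θ := by
  intro x y δ hδ
  obtain ⟨γ, hγ, hγ0, hγ3, hγΘ, hγvar⟩ :=
    exists_short_path_of_dense (interior_eq_empty_iff_dense_compl.1 hint) (hasShortPaths_compl h)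
      x y (ENNReal.ofReal_pos.2 hδ).ne'
  refine ⟨0, 3, γ, by norm_num, hγ, hγ0, hγ3, ?_, ?_⟩
  · rwa [pathLen_eq_eVariationOn, ENNReal.ofReal_add (norm_nonneg _) hδ.le, ← dist_eq_norm,
      ← edist_dist, edist_comm]
  · rintro _ ⟨⟨t, ht, rfl⟩, htΘ⟩
    rcases ht.1.eq_or_lt with rfl | ht0
    · exact .inl hγ0
    rcases ht.2.eq_or_lt with rfl | ht3
    · exact .inr hγ3
    exact absurd htΘ (hγΘ ⟨ht0, ht3⟩)
end

section
/- Let d ≥ 1. If Θ ⊆ ℝ^d satisfies ℋ^{d−1}(Θ) = 0, where ℋ^{d−1} denotes the (d−1)-dimensional Hausdorff measure, then Θ is null permeable. -/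
open Set MeasureTheory
open scoped ENNReal NNReal RealInnerProductSpace

set_option maxHeartbeats 1000000

/-- `Θ ⊆ ℝ^d` is permeable: for all `x, y` and `δ > 0` there is a path from `x` to `y`
of length at most `‖y - x‖ + δ` such that the closure of its intersection with `Θ`
is countable. -/
def Permeable {d : ℕ} (Θ : Set (EuclideanSpace ℝ (Fin d))) : Prop :=
  ∀ x y : EuclideanSpace ℝ (Fin d), ∀ δ : ℝ, 0 < δ →
    ∃ (a b : ℝ) (γ : ℝ → EuclideanSpace ℝ (Fin d)),
      a < b ∧ ContinuousOn γ (Set.Icc a b) ∧ γ a = x ∧ γ b = y ∧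
      pathLen γ a b ≤ ENNReal.ofReal (‖y - x‖ + δ) ∧
      (closure (γ '' Set.Icc a b ∩ Θ)).Countable

private lemma euclid_ball_pos (k : ℕ) (r : ℝ) (hr : 0 < r) :
    0 < μH[(k:ℝ)] (Metric.closedBall (0 : EuclideanSpace ℝ (Fin k)) r) := by
  have hpi : (μH[(k : ℝ)] : Measure (Fin k → ℝ)) = volume := by
    have := hausdorffMeasure_pi_real (ι := Fin k)
    simpa only [Fintype.card_fin] using this
  set B := Metric.closedBall (0 : EuclideanSpace ℝ (Fin k)) r with hBdef
  have hlip1 : LipschitzWith 1 (WithLp.equiv 2 (Fin k → ℝ)) :=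
    PiLp.lipschitzWith_ofLp 2 _
  have h1 : μH[(k : ℝ)] ((WithLp.equiv 2 (Fin k → ℝ)) '' B) ≤
      (1 : ℝ≥0) ^ (k : ℝ) * μH[(k : ℝ)] B :=
    hlip1.hausdorffMeasure_image_le (by positivity) B
  have himg : (WithLp.equiv 2 (Fin k → ℝ)) '' B =
      (MeasurableEquiv.toLp 2 (Fin k → ℝ)) ⁻¹' B := by
    rw [Equiv.image_eq_preimage_symm]
    rfl
  have hvol : volume ((WithLp.equiv 2 (Fin k → ℝ)) '' B) = volume B := by
    rw [himg]
    exact (PiLp.volume_preserving_toLp (Fin k)).measure_preimage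
      measurableSet_closedBall.nullMeasurableSet
  have hpos : 0 < volume B := Metric.measure_closedBall_pos _ _ hr
  calc (0:ℝ≥0∞) < volume B := hpos
    _ = volume ((WithLp.equiv 2 (Fin k → ℝ)) '' B) := hvol.symm
    _ = μH[(k : ℝ)] ((WithLp.equiv 2 (Fin k → ℝ)) '' B) := by rw [hpi]
    _ ≤ (1 : ℝ≥0) ^ (k : ℝ) * μH[(k : ℝ)] B := h1
    _ = μH[(k : ℝ)] B := by
        rw [ENNReal.coe_one, ENNReal.one_rpow, one_mul]



private lemma lip_core {d : ℕ} (v : EuclideanSpace ℝ (Fin d)) (hv : ‖v‖ ≤ 1) (a ε R : ℝ)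
    (hε : 0 < ε) (hR : 0 ≤ R) :
    ∃ K : ℝ≥0, LipschitzOnWith K (fun u : EuclideanSpace ℝ (Fin d) => (a / ⟪u, v⟫) • u)
      {u | ε ≤ |⟪u, v⟫| ∧ ‖u‖ ≤ R} := by
  refine ⟨⟨2 * |a| * R / ε ^ 2, by positivity⟩, LipschitzOnWith.of_dist_le_mul ?_⟩
  rintro u ⟨hu1, hu2⟩ u' ⟨hu'1, hu'2⟩
  set s : ℝ := ⟪u, v⟫ with hs
  set s' : ℝ := ⟪u', v⟫ with hs'
  have hsne : s ≠ 0 := fun h => by simp [h] at hu1; linarith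
  have hs'ne : s' ≠ 0 := fun h => by simp [h] at hu'1; linarith
  have key : (a / s) • u - (a / s') • u' = (a / (s * s')) • (s' • u - s • u') := by
    rw [smul_sub, smul_smul, smul_smul]
    congr 1 <;> · congr 1; field_simp
  have key2 : s' • u - s • u' = s' • (u - u') + (s' - s) • u' := by module
  rw [dist_eq_norm, dist_eq_norm, key, norm_smul]
  have h1 : ‖s' • u - s • u'‖ ≤ 2 * R * ‖u - u'‖ := by
    rw [key2]
    have e1 : ‖s' • (u - u')‖ ≤ R * ‖u - u'‖ := by
      rw [norm_smul]
      have : |s'| ≤ R := le_trans (abs_real_inner_le_norm u' v)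
        (by nlinarith [norm_nonneg (u' - u), norm_nonneg v])
      exact mul_le_mul_of_nonneg_right (by simpa using this) (norm_nonneg _)
    have e2 : ‖(s' - s) • u'‖ ≤ ‖u - u'‖ * R := by
      rw [norm_smul]
      have h3 : |s' - s| ≤ ‖u' - u‖ := by
        have : s' - s = ⟪u' - u, v⟫ := by rw [hs, hs', ← inner_sub_left]
        rw [this]
        exact le_trans (abs_real_inner_le_norm _ _)
          (by nlinarith [norm_nonneg (u' - u)])
      calc |s' - s| * ‖u'‖ ≤ ‖u' - u‖ * R := by
            apply mul_le_mul h3 hu'2 (norm_nonneg _) (norm_nonneg _)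
        _ = ‖u - u'‖ * R := by rw [norm_sub_rev]
    calc ‖s' • (u - u') + (s' - s) • u'‖ ≤ ‖s' • (u - u')‖ + ‖(s' - s) • u'‖ :=
          norm_add_le _ _
      _ ≤ R * ‖u - u'‖ + ‖u - u'‖ * R := add_le_add e1 e2
      _ = 2 * R * ‖u - u'‖ := by ring
  have h2 : |a / (s * s')| ≤ |a| / ε ^ 2 := by
    rw [abs_div, abs_mul]
    gcongr
    nlinarith
  calc |a / (s * s')| * ‖s' • u - s • u'‖ ≤ (|a| / ε ^ 2) * (2 * R * ‖u - u'‖) :=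
        mul_le_mul h2 h1 (norm_nonneg _) (by positivity)
    _ = (2 * |a| * R / ε ^ 2) * ‖u - u'‖ := by ring
    _ = (⟨2 * |a| * R / ε ^ 2, by positivity⟩ : ℝ≥0) * ‖u - u'‖ := rfl



private lemma pathLen_le_lip {d : ℕ} (γ : ℝ → EuclideanSpace ℝ (Fin d)) (a b : ℝ)
    (K : ℝ≥0) (hγ : LipschitzWith K γ) :
    pathLen γ a b ≤ ENNReal.ofReal ((K : ℝ) * (b - a)) := by
  refine iSup_le fun n => iSup_le fun t => ?_
  obtain ⟨t, ht, ht0, htn⟩ := t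
  calc ∑ i ∈ Finset.range n, ENNReal.ofReal ‖γ (t (i + 1)) - γ (t i)‖
      ≤ ∑ i ∈ Finset.range n, ENNReal.ofReal ((K : ℝ) * (t (i + 1) - t i)) := by
        refine Finset.sum_le_sum fun i _ => ENNReal.ofReal_le_ofReal ?_
        have h := hγ.dist_le_mul (t (i + 1)) (t i)
        rw [dist_eq_norm, Real.dist_eq,
          abs_of_nonneg (sub_nonneg.2 (ht (Nat.le_succ i)))] at h
        exact h
    _ = ENNReal.ofReal (∑ i ∈ Finset.range n, (K : ℝ) * (t (i + 1) - t i)) :=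
        (ENNReal.ofReal_sum_of_nonneg fun i _ =>
          mul_nonneg K.coe_nonneg (sub_nonneg.2 (ht (Nat.le_succ i)))).symm
    _ = ENNReal.ofReal ((K : ℝ) * (b - a)) := by
        rw [← Finset.mul_sum, Finset.sum_range_sub (fun i => t i), ht0, htn]


/-- If `Θ ⊆ ℝ^d` (`d ≥ 1`) has vanishing `(d-1)`-dimensional Hausdorff measure, then `Θ` is
null permeable. -/
theorem nullPermeable_of_hausdorffMeasure_zero {d : ℕ} (hd : 1 ≤ d)
    (Θ : Set (EuclideanSpace ℝ (Fin d)))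
    (hΘ : μH[((d : ℝ) - 1)] Θ = 0) :
    NullPermeable Θ := by
  have hs0 : (0:ℝ) ≤ (d : ℝ) - 1 := by
    have : (1:ℝ) ≤ (d:ℝ) := by exact_mod_cast hd
    linarith
  intro x y δ hδ
  by_cases hxy : x = y
  · refine ⟨0, 1, fun _ => x, one_pos, continuousOn_const, rfl, hxy ▸ rfl, ?_, ?_⟩
    · have : pathLen (fun _ => x) (0:ℝ) 1 = 0 := by
        refine le_antisymm (iSup_le fun n => iSup_le fun t => ?_) zero_le
        simp
      rw [this]; exact zero_le
    · intro p hp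
      rcases hp.1 with ⟨t, _, rfl⟩
      exact Or.inl rfl
  -- main case
  · have hD : (0:ℝ) < ‖y - x‖ := by
      rw [norm_pos_iff, sub_ne_zero]; exact fun h => hxy h.symm
    set c : ℝ := ‖y - x‖ / 2 with hc
    have hc0 : 0 < c := by positivity
    set v : EuclideanSpace ℝ (Fin d) := ‖y - x‖⁻¹ • (y - x) with hvdef
    have hv : ‖v‖ = 1 := by
      rw [hvdef, norm_smul, norm_inv, norm_norm, inv_mul_cancel₀ hD.ne']
    have hy : y = x + (2 * c) • v := by
      rw [hvdef, smul_smul, hc]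
      have h1 : 2 * (‖y - x‖ / 2) * ‖y - x‖⁻¹ = 1 := by field_simp
      rw [h1, one_smul]
      abel
    set z : EuclideanSpace ℝ (Fin d) := x + c • v with hzdef
    have hzx : z - x = c • v := by rw [hzdef]; abel
    have hzy : z - y = (-c) • v := by rw [hzdef, hy]; module
    set r : ℝ := Real.sqrt (c * δ) with hrdef
    have hr : 0 < r := Real.sqrt_pos.2 (by positivity)
    have hr2 : r ^ 2 = c * δ := Real.sq_sqrt (by positivity)
    set W : Submodule ℝ (EuclideanSpace ℝ (Fin d)) := (ℝ ∙ v)ᗮ with hWdef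
    have hWv : ∀ u : W, ⟪(u : EuclideanSpace ℝ (Fin d)), v⟫ = 0 := by
      intro u
      exact (Submodule.mem_orthogonal' _ _).1 u.2 v (Submodule.mem_span_singleton_self v)
    have hrank : Module.finrank ℝ W = d - 1 := by
      have h1 : Module.finrank ℝ (ℝ ∙ v) + Module.finrank ℝ W = d := by
        rw [hWdef]
        rw [Submodule.finrank_add_finrank_orthogonal]
        exact finrank_euclideanSpace_fin
      have h2 : Module.finrank ℝ (ℝ ∙ v) = 1 :=
        finrank_span_singleton (fun h => by rw [h, norm_zero] at hv; linarith)
      omega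
    have e : EuclideanSpace ℝ (Fin (d-1)) ≃ₗᵢ[ℝ] W := by
      rw [← hrank]
      exact (stdOrthonormalBasis ℝ W).repr.symm
    set ι : EuclideanSpace ℝ (Fin (d-1)) → EuclideanSpace ℝ (Fin d) :=
      fun w => (e w : EuclideanSpace ℝ (Fin d)) with hιdef
    have hιv : ∀ w, ⟪ι w, v⟫ = 0 := fun w => hWv (e w)
    have hιn : ∀ w, ‖ι w‖ = ‖w‖ := fun w => e.norm_map w
    set Bad : EuclideanSpace ℝ (Fin d) → Set (EuclideanSpace ℝ (Fin (d-1))) :=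
      fun p => {w | ‖w‖ ≤ r ∧ ∃ t, t ∈ Set.Ioc (0:ℝ) 1 ∧ p + t • (z + ι w - p) ∈ Θ} with hBad
    have key : ∀ (p : EuclideanSpace ℝ (Fin d)) (a : ℝ), a ≠ 0 → ⟪z - p, v⟫ = a →
        μH[((d:ℝ)-1)] (Bad p) = 0 := by
      intro p a ha hza
      set R : ℝ := ‖z - p‖ + r with hRdef
      have hR : 0 ≤ R := by positivity
      set g : EuclideanSpace ℝ (Fin d) → EuclideanSpace ℝ (Fin (d-1)) := fun θ =>
        e.symm (W.orthogonalProjectionOnto ((p - z) + (a / ⟪θ - p, v⟫) • (θ - p))) with hgdef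
      set A : ℕ → Set (EuclideanSpace ℝ (Fin d)) := fun n =>
        {θ | 1/(n+1 : ℝ) ≤ |⟪θ - p, v⟫| ∧ ‖θ - p‖ ≤ R} with hAdef
      have cover : Bad p ⊆ ⋃ n, g '' (Θ ∩ A n) := by
        rintro w ⟨hwr, t, ⟨ht0, ht1⟩, hθ⟩
        set θ := p + t • (z + ι w - p) with hθdef
        have hsub : θ - p = t • (z + ι w - p) := by rw [hθdef]; abel
        have hzwp : z + ι w - p = (z - p) + ι w := by abel
        have hinner : ⟪θ - p, v⟫ = t * a := by
          rw [hsub, real_inner_smul_left, hzwp, inner_add_left, hza, hιv, add_zero]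
        have hta : 0 < t * |a| := mul_pos ht0 (abs_pos.2 ha)
        obtain ⟨n, hn⟩ := exists_nat_one_div_lt hta
        refine mem_iUnion.2 ⟨n, θ, ⟨hθ, ?_, ?_⟩, ?_⟩
        · rw [hinner, abs_mul, abs_of_pos ht0]
          exact_mod_cast hn.le
        · rw [hsub, norm_smul, Real.norm_eq_abs, abs_of_pos ht0, hzwp]
          have h1 := norm_add_le (z - p) (ι w)
          have h2 := hιn w
          have h3 := norm_nonneg (z - p + ι w)
          calc t * ‖z - p + ι w‖ ≤ 1 * ‖z - p + ι w‖ :=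
                mul_le_mul_of_nonneg_right ht1 h3
            _ = ‖z - p + ι w‖ := one_mul _
            _ ≤ R := by rw [hRdef]; linarith
        · show g θ = w
          show e.symm (W.orthogonalProjectionOnto ((p - z) + (a / ⟪θ - p, v⟫) • (θ - p))) = w
          rw [hinner, hsub]
          have hce : (a / (t * a)) • (t • (z + ι w - p)) = z + ι w - p := by
            rw [smul_smul]
            have h4 : a / (t * a) * t = 1 := by field_simp
            rw [h4, one_smul]
          rw [hce]
          have h5 : (p - z) + (z + ι w - p) = ι w := by abel
          rw [h5]
          have h6 : (ι w : EuclideanSpace ℝ (Fin d)) = ((e w : W) : EuclideanSpace ℝ (Fin d)) := rfl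
          rw [h6, Submodule.orthogonalProjectionOnto_mem_subspace_eq_self, e.symm_apply_apply]
      have piece : ∀ n : ℕ, μH[((d:ℝ)-1)] (g '' (Θ ∩ A n)) = 0 := by
        intro n
        have hεn : (0:ℝ) < 1/(n+1) := by positivity
        obtain ⟨K, hK⟩ := lip_core v hv.le a (1/(n+1)) R hεn hR
        have hsubL : LipschitzWith 1 (fun θ : EuclideanSpace ℝ (Fin d) => θ - p) :=
          LipschitzWith.of_dist_le_mul fun θ θ' => by
            simp [dist_eq_norm, sub_sub_sub_cancel_right]
        have hmaps : MapsTo (fun θ : EuclideanSpace ℝ (Fin d) => θ - p) (A n)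
            {u | 1/(n+1:ℝ) ≤ |⟪u, v⟫| ∧ ‖u‖ ≤ R} := fun θ hθ => hθ
        have hcomp1 : LipschitzOnWith (K * 1)
            ((fun u : EuclideanSpace ℝ (Fin d) => (a / ⟪u, v⟫) • u) ∘ (fun θ => θ - p)) (A n) :=
          hK.comp hsubL.lipschitzOnWith hmaps
        have haddL : LipschitzWith 1 (fun u : EuclideanSpace ℝ (Fin d) => (p - z) + u) :=
          LipschitzWith.of_dist_le_mul fun u u' => by
            simp [dist_eq_norm, add_sub_add_left_eq_sub]
        have houter := ((e.symm.isometry.lipschitz.comp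
          (W.orthogonalProjectionOnto).lipschitz).comp haddL).comp_lipschitzOnWith hcomp1
        have hg : LipschitzOnWith (1 * ‖(W.orthogonalProjectionOnto : EuclideanSpace ℝ (Fin d) →L[ℝ] W)‖₊ * 1 * (K * 1)) g (A n) := houter
        refine le_antisymm ?_ zero_le
        calc μH[((d:ℝ)-1)] (g '' (Θ ∩ A n))
            ≤ _ ^ ((d:ℝ)-1) * μH[((d:ℝ)-1)] (Θ ∩ A n) :=
              (hg.mono inter_subset_right).hausdorffMeasure_image_le hs0
          _ = _ ^ ((d:ℝ)-1) * 0 := by rw [measure_mono_null inter_subset_left hΘ]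
          _ = 0 := mul_zero _
      exact measure_mono_null cover (measure_iUnion_null piece)
    have hcast : ((d - 1 : ℕ) : ℝ) = (d : ℝ) - 1 := by
      rw [Nat.cast_sub hd, Nat.cast_one]
    have hball : 0 < μH[((d:ℝ)-1)] (Metric.closedBall (0 : EuclideanSpace ℝ (Fin (d-1))) r) := by
      rw [← hcast]
      exact euclid_ball_pos (d-1) r hr
    have hbx : μH[((d:ℝ)-1)] (Bad x) = 0 := by
      refine key x c hc0.ne' ?_
      rw [hzx, real_inner_smul_left, real_inner_self_eq_norm_mul_norm, hv]
      ring
    have hby : μH[((d:ℝ)-1)] (Bad y) = 0 := by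
      refine key y (-c) (neg_ne_zero.2 hc0.ne') ?_
      rw [hzy, real_inner_smul_left, real_inner_self_eq_norm_mul_norm, hv]
      ring
    obtain ⟨w, hwball, hwbad⟩ :
        ∃ w, w ∈ Metric.closedBall (0 : EuclideanSpace ℝ (Fin (d-1))) r ∧
          w ∉ Bad x ∪ Bad y := by
      by_contra h
      push_neg at h
      have hsub2 : Metric.closedBall (0 : EuclideanSpace ℝ (Fin (d-1))) r ⊆ Bad x ∪ Bad y :=
        fun w hw => h w hw
      exact absurd (measure_mono_null hsub2 (measure_union_null hbx hby)) (ne_of_gt hball)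
    set m : EuclideanSpace ℝ (Fin d) := z + ι w with hmdef
    have hwr : ‖w‖ ≤ r := by rwa [Metric.mem_closedBall, dist_zero_right] at hwball
    have hmx : m - x = c • v + ι w := by
      rw [hmdef, show z + ι w - x = (z - x) + ι w from by abel, hzx]
    have hmy : m - y = (-c) • v + ι w := by
      rw [hmdef, show z + ι w - y = (z - y) + ι w from by abel, hzy]
    have hvw : ⟪v, ι w⟫ = 0 := by rw [real_inner_comm]; exact hιv w
    have hnx : ‖m - x‖ ^ 2 = c ^ 2 + ‖w‖ ^ 2 := by
      rw [hmx, norm_add_sq_real, real_inner_smul_left, hvw, mul_zero, norm_smul, hv,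
        Real.norm_eq_abs, mul_one, sq_abs, hιn]
      ring
    have hny : ‖m - y‖ ^ 2 = c ^ 2 + ‖w‖ ^ 2 := by
      rw [hmy, norm_add_sq_real, real_inner_smul_left, hvw, mul_zero, norm_smul, hv,
        Real.norm_eq_abs, mul_one, sq_abs, hιn]
      ring
    set L : ℝ := ‖m - x‖ with hLdef
    have hLx0 : 0 ≤ L := norm_nonneg _
    have hLeq : ‖m - y‖ = L := by
      have h2 : ‖m - y‖ ^ 2 = L ^ 2 := by rw [hny, hLdef, hnx]
      nlinarith [norm_nonneg (m - y), hLx0]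
    have hw2 : ‖w‖ ^ 2 ≤ c * δ := by nlinarith [hwr, norm_nonneg w, hr.le, hr2]
    have hLle : L ≤ c + δ / 2 := by nlinarith [hnx, hw2, hδ, hc0, hLx0]
    set γ : ℝ → EuclideanSpace ℝ (Fin d) := fun t =>
      if t ≤ 1/2 then x + (2*t) • (m - x) else y + (2 - 2*t) • (m - y) with hγdef
    have hγ0 : γ 0 = x := by
      rw [hγdef]
      norm_num
    have hγ1 : γ 1 = y := by
      rw [hγdef]
      norm_num
    have hγh : γ (1/2 : ℝ) = m := by
      rw [hγdef]
      norm_num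
    have hform : ∀ u : ℝ, 1/2 ≤ u → γ u = y + (2 - 2*u) • (m - y) := by
      intro u hu
      rcases eq_or_lt_of_le hu with h | h
      · rw [← h, hγh]
        norm_num
      · rw [hγdef]
        simp only [if_neg (not_le.2 h)]
    have case1 : ∀ s t : ℝ, s ≤ t → t ≤ 1/2 → dist (γ s) (γ t) = 2*L*(t - s) := by
      intro s t hst h2
      have h1 : s ≤ 1/2 := le_trans hst h2
      rw [hγdef]
      simp only [if_pos h1, if_pos h2]
      rw [dist_eq_norm, show (x + (2*s) • (m - x)) - (x + (2*t) • (m - x))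
          = (2*s - 2*t) • (m - x) from by module, norm_smul, Real.norm_eq_abs,
        abs_of_nonpos (by linarith), ← hLdef]
      ring
    have case2 : ∀ s t : ℝ, s ≤ t → 1/2 ≤ s → dist (γ s) (γ t) = 2*L*(t - s) := by
      intro s t hst h1
      rw [hform s h1, hform t (le_trans h1 hst)]
      rw [dist_eq_norm, show (y + (2 - 2*s) • (m - y)) - (y + (2 - 2*t) • (m - y))
          = (2*t - 2*s) • (m - y) from by module, norm_smul, Real.norm_eq_abs,
        abs_of_nonneg (by linarith), hLeq]
      ring
    have hstep : ∀ s t : ℝ, s ≤ t → dist (γ s) (γ t) ≤ 2*L*(t - s) := by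
      intro s t hst
      rcases le_or_gt t (1/2) with h2 | h2
      · exact le_of_eq (case1 s t hst h2)
      rcases le_or_gt (1/2 : ℝ) s with h1 | h1
      · exact le_of_eq (case2 s t hst h1)
      calc dist (γ s) (γ t) ≤ dist (γ s) (γ (1/2)) + dist (γ (1/2)) (γ t) := dist_triangle _ _ _
        _ = 2*L*(1/2 - s) + 2*L*(t - 1/2) := by
            rw [case1 s (1/2) h1.le le_rfl, case2 (1/2) t h2.le le_rfl]
        _ = 2*L*(t - s) := by ring
    have hlip : LipschitzWith (Real.toNNReal (2*L)) γ := by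
      apply LipschitzWith.of_dist_le_mul
      intro s t
      have hco : (Real.toNNReal (2*L) : ℝ) = 2*L :=
        Real.coe_toNNReal _ (by linarith)
      rcases le_total s t with h | h
      · calc dist (γ s) (γ t) ≤ 2*L*(t - s) := hstep s t h
          _ ≤ (Real.toNNReal (2*L) : ℝ) * dist s t := by
              rw [hco, Real.dist_eq, abs_of_nonpos (by linarith)]
              nlinarith [hLx0]
      · calc dist (γ s) (γ t) = dist (γ t) (γ s) := dist_comm _ _
          _ ≤ 2*L*(s - t) := hstep t s h
          _ ≤ (Real.toNNReal (2*L) : ℝ) * dist s t := by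
              rw [hco, Real.dist_eq, abs_of_nonneg (by linarith)]
    have hplen : pathLen γ 0 1 ≤ ENNReal.ofReal (‖y - x‖ + δ) := by
      refine le_trans (pathLen_le_lip γ 0 1 _ hlip) (ENNReal.ofReal_le_ofReal ?_)
      have hco : (Real.toNNReal (2*L) : ℝ) = 2*L :=
        Real.coe_toNNReal _ (by linarith)
      rw [hco]
      have hyx2 : ‖y - x‖ = 2 * c := by rw [hc]; ring
      rw [hyx2, show 2*L*(1-0) = 2*L from by ring]
      linarith [hLle]
    have himg : γ '' Icc (0:ℝ) 1 ∩ Θ ⊆ {x, y} := by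
      rintro q ⟨⟨t, ⟨ht0, ht1⟩, rfl⟩, hqΘ⟩
      rcases le_or_gt t (1/2) with h2 | h2
      · rcases eq_or_lt_of_le ht0 with h0 | h0
        · left
          rw [← h0, hγ0]
        · exfalso
          apply hwbad
          left
          refine ⟨hwr, 2*t, ⟨by linarith, by linarith⟩, ?_⟩
          have hγt : γ t = x + (2*t) • (z + ι w - x) := by
            rw [hγdef]
            simp only [if_pos h2, hmdef]
          rw [← hγt]
          exact hqΘ
      · rcases eq_or_lt_of_le ht1 with h1 | h1
        · right
          rw [h1, hγ1]
          exact rfl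
        · exfalso
          apply hwbad
          right
          refine ⟨hwr, 2 - 2*t, ⟨by linarith, by linarith⟩, ?_⟩
          have hγt : γ t = y + (2 - 2*t) • (z + ι w - y) := by
            rw [hγdef]
            simp only [if_neg (not_le.2 h2), hmdef]
          rw [← hγt]
          exact hqΘ
    exact ⟨0, 1, γ, one_pos, hlip.continuous.continuousOn, hγ0, hγ1, hplen, himg⟩
end

section
/- Let d ≥ 1. If Θ ⊆ ℝ^d is a Borel set with ℋ^{d−1}(Θ) < ∞, where ℋ^{d−1} denotes the (d−1)-dimensional Hausdorff measure, then Θ is permeable. -/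
/-!
Join `x` to `y` by two segments through a point `m` of the bisecting hyperplane `H`, close to the
midpoint. Central projection from `x` onto `H` is Lipschitz on every region
`{z | ε ≤ ⟪z - x, y - x⟫}` of a ball, and a Lipschitz map from a set of finite
`ℋ^{d-1}`-measure to a `(d-1)`-dimensional space has finite fibres almost everywhere (an
Eilenberg-type counting argument over fine covers). Hence for almost every `m ∈ H` the segment
`[x, m]` meets each such region of `Θ` in finitely many points, so `Θ ∩ [x, m]` accumulates at most
at `x`; likewise from `y`. The closure of `Θ` along the path is then countable.
-/

open Set MeasureTheory
open scoped ENNReal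

open Metric AffineMap Module
open scoped NNReal RealInnerProductSpace

section Path

variable {d : ℕ}

lemma pathLen_le_eVariationOn (γ : ℝ → EuclideanSpace ℝ (Fin d)) (a b : ℝ) :
    pathLen γ a b ≤ eVariationOn γ (Icc a b) := by
  refine iSup₂_le fun n ⟨t, ht, ht0, htn⟩ ↦ ?_
  have hmem : ∀ i ∈ (Icc 0 n : Set ℕ), t i ∈ Icc a b := fun i hi ↦
    ⟨ht0 ▸ ht hi.1, htn ▸ ht hi.2⟩
  simpa only [← Finset.range_eq_Ico, edist_dist, dist_eq_norm] using
    eVariationOn.sum_le_of_monotoneOn_Icc (f := γ) (ht.monotoneOn _) hmem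

lemma eVariationOn_lineMap_comp_sub_le {E : Type*} [NormedAddCommGroup E] [NormedSpace ℝ E]
    (x y : E) (a : ℝ) :
    eVariationOn (fun t ↦ lineMap x y (t - a)) (Icc a (a + 1)) ≤ edist x y := by
  have hsub : MonotoneOn (fun t : ℝ ↦ t - a) (Icc a (a + 1)) := fun _ _ _ _ h ↦
    sub_le_sub_right h a
  calc eVariationOn (lineMap x y ∘ fun t ↦ t - a) (Icc a (a + 1))
      ≤ nndist x y * eVariationOn (fun t : ℝ ↦ t - a) (Icc a (a + 1)) :=
        ((lipschitzWith_lineMap x y).lipschitzOnWith (s := univ)).comp_eVariationOn_le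
          (mapsTo_univ _ _)
    _ = edist x y := by
        rw [← inter_self (Icc a (a + 1)), hsub.eVariationOn_eq ⟨le_rfl, by linarith⟩
          ⟨by linarith, le_rfl⟩, edist_nndist]
        norm_num

lemma exists_path_along_two_segments (x m y : EuclideanSpace ℝ (Fin d)) :
    ∃ γ : ℝ → EuclideanSpace ℝ (Fin d), ContinuousOn γ (Icc 0 2) ∧ γ 0 = x ∧ γ 2 = y ∧
      pathLen γ 0 2 ≤ edist x m + edist m y ∧
      γ '' Icc 0 2 ⊆ segment ℝ x m ∪ segment ℝ m y := by
  set γ := fun t : ℝ ↦ if t ≤ 1 then lineMap x m t else lineMap m y (t - 1)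
  have hleft : EqOn γ (fun t ↦ lineMap x m (t - 0)) (Icc 0 (0 + 1)) := fun t ht ↦ by
    simp [γ, show t ≤ 1 by simpa using ht.2]
  have hright : EqOn γ (fun t ↦ lineMap m y (t - 1)) (Icc 1 (1 + 1)) := fun t ht ↦ by
    rcases ht.1.eq_or_lt with rfl | h
    · simp [γ]
    · simp [γ, not_le.2 h]
  refine ⟨γ, ?_, by simp [γ], by norm_num [γ], ?_, ?_⟩
  · exact (Continuous.if_le (by fun_prop) (by fun_prop) continuous_id continuous_const
      fun t ht ↦ by subst ht; simp).continuousOn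
  · calc pathLen γ 0 2 ≤ eVariationOn γ (univ ∩ Icc 0 2) := by
          rw [univ_inter]; exact pathLen_le_eVariationOn γ 0 2
      _ = eVariationOn γ (Icc 0 (0 + 1)) + eVariationOn γ (Icc 1 (1 + 1)) := by
          rw [← eVariationOn.Icc_add_Icc γ zero_le_one one_le_two (mem_univ 1)]
          norm_num
      _ ≤ edist x m + edist m y := by
          rw [eVariationOn.eq_of_eqOn hleft, eVariationOn.eq_of_eqOn hright]
          exact add_le_add (eVariationOn_lineMap_comp_sub_le x m 0)
            (eVariationOn_lineMap_comp_sub_le m y 1)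
  · rintro _ ⟨t, ht, rfl⟩
    rw [segment_eq_image_lineMap, segment_eq_image_lineMap]
    by_cases h : t ≤ 1
    · exact Or.inl ⟨t, ⟨ht.1, h⟩, by simp [γ, h]⟩
    · exact Or.inr ⟨t - 1, ⟨by linarith, by linarith [ht.2]⟩, by simp [γ, h]⟩

end Path

lemma countable_closure_of_finite_inter_superlevel {X : Type*} [TopologicalSpace X]
    [T1Space X] {F : Set X} {g : X → ℝ} {q : X} (hg : Continuous g)
    (hpos : ∀ z ∈ closure F, z ≠ q → 0 < g z)
    (hfin : ∀ ε > 0, (F ∩ {z | ε ≤ g z}).Finite) : (closure F).Countable := by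
  have hsub : closure F ⊆ {q} ∪ ⋃ k : ℕ, F ∩ {z | 1 / (k + 1 : ℝ) ≤ g z} := by
    intro z hz
    rcases eq_or_ne z q with rfl | hzq
    · exact Or.inl rfl
    obtain ⟨k, hk⟩ := exists_nat_one_div_lt (hpos z hz hzq)
    have hcl : closure F ⊆ (F ∩ {z | 1 / (k + 1 : ℝ) ≤ g z}) ∪ {z | g z ≤ 1 / (k + 1 : ℝ)} :=
      closure_minimal (fun w hw ↦ (le_total (1 / (k + 1 : ℝ)) (g w)).imp (⟨hw, ·⟩) id)
        ((hfin _ (by positivity)).isClosed.union (isClosed_le hg continuous_const))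
    exact Or.inr (mem_iUnion.2 ⟨k, (hcl hz).resolve_right fun h ↦ (not_le.2 hk) h⟩)
  exact ((countable_singleton q).union
    (countable_iUnion fun k ↦ (hfin _ (by positivity)).countable)).mono hsub

lemma exists_sub_eq_smul_of_mem_segment {E : Type*} [AddCommGroup E] [Module ℝ E] {q m z : E}
    (hz : z ∈ segment ℝ q m) (hzq : z ≠ q) :
    ∃ θ ∈ Ioc (0 : ℝ) 1, z - q = θ • (m - q) := by
  rw [segment_eq_image'] at hz
  obtain ⟨θ, ⟨hθ0, hθ1⟩, rfl⟩ := hz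
  refine ⟨θ, ⟨hθ0.lt_of_ne ?_, hθ1⟩, add_sub_cancel_left q _⟩
  rintro rfl
  simp at hzq

lemma isClosed_segment {E : Type*} [NormedAddCommGroup E] [NormedSpace ℝ E] (q m : E) :
    IsClosed (segment ℝ q m) := by
  rw [segment_eq_image']
  exact (isCompact_Icc.image (by fun_prop)).isClosed

section CentralProjection

variable {E : Type*} [NormedAddCommGroup E] [InnerProductSpace ℝ E]

/-- Central projection from `q` onto the hyperplane `{z | ⟪z - q, u⟫ = c}`. -/
noncomputable def centralProj (q u : E) (c : ℝ) (z : E) : E :=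
  q + (c / ⟪z - q, u⟫) • (z - q)

lemma centralProj_eq_of_mem_segment {q u m z : E} {c : ℝ} (hc : ⟪m - q, u⟫ = c)
    (hc0 : c ≠ 0) (hz : z ∈ segment ℝ q m) (hzq : z ≠ q) : centralProj q u c z = m := by
  obtain ⟨θ, hθ, hzθ⟩ := exists_sub_eq_smul_of_mem_segment hz hzq
  have hθc : c / (θ * c) * θ = 1 := by field_simp [hθ.1.ne']
  rw [centralProj, hzθ, real_inner_smul_left, hc, smul_smul, hθc, one_smul, add_sub_cancel]

lemma exists_lipschitzOnWith_centralProj [FiniteDimensional ℝ E] (q u : E) (c : ℝ) {β : ℝ}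
    (hβ : 0 < β) (R : ℝ) :
    ∃ K, LipschitzOnWith K (centralProj q u c) ({z | β ≤ ⟪z - q, u⟫} ∩ closedBall q R) := by
  have hconv : Convex ℝ {z | β ≤ ⟪z - q, u⟫} := by
    have h : {z | β ≤ ⟪z - q, u⟫} = {z | β + ⟪q, u⟫ ≤ innerₛₗ ℝ u z} := by
      ext z; simp [inner_sub_left, real_inner_comm, le_sub_iff_add_le]
    exact h ▸ convex_halfSpace_ge (innerₛₗ ℝ u).isLinear _
  refine ContDiffOn.exists_lipschitzOnWith (n := 1) ?_ one_ne_zero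
    (hconv.inter (convex_closedBall q R))
    ((isCompact_closedBall q R).inter_left (isClosed_le continuous_const (by fun_prop)))
  exact contDiffOn_const.add ((contDiffOn_const.div
    ((contDiff_id.sub contDiff_const).inner ℝ contDiff_const).contDiffOn
    fun z hz ↦ (hβ.trans_le hz.1).ne').smul (by fun_prop))

end CentralProjection

lemma mul_measure_le_tsum_of_le_encard {α ι : Type*} [MeasurableSpace α] [Countable ι]
    (μ : Measure α) (A : ι → Set α) {E : Set α} {N : ℝ≥0∞}
    (h : ∀ p ∈ E, N ≤ {i | p ∈ A i}.encard) : N * μ E ≤ ∑' i, μ (A i) := by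
  set B := fun i ↦ toMeasurable μ (A i)
  set G : α → ℝ≥0∞ := fun p ↦ ∑' i, (B i).indicator 1 p
  have hB : ∀ i, MeasurableSet (B i) := fun i ↦ measurableSet_toMeasurable _ _
  have hG : Measurable G := Measurable.tsum fun i ↦ measurable_one.indicator (hB i)
  have hEG : E ⊆ {p | N ≤ G p} := fun p hp ↦ calc
    N ≤ {i | p ∈ A i}.encard := h p hp
    _ ≤ {i | p ∈ B i}.encard := by
        gcongr
        exact fun i hi ↦ subset_toMeasurable _ _ hi
    _ = G p := by
        rw [← ENNReal.tsum_set_one, tsum_subtype (f := fun _ ↦ (1 : ℝ≥0∞))]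
        rfl
  calc N * μ E ≤ N * μ {p | N ≤ G p} := by gcongr
    _ ≤ ∫⁻ p, G p ∂μ := mul_meas_ge_le_lintegral₀ hG.aemeasurable N
    _ = ∑' i, μ (A i) := by
        rw [lintegral_tsum fun i ↦ (measurable_one.indicator (hB i)).aemeasurable]
        simp [lintegral_indicator_one (hB _), B, measure_toMeasurable]

section AddHaar

variable {F : Type*} [NormedAddCommGroup F] [NormedSpace ℝ F] [FiniteDimensional ℝ F]
  [MeasurableSpace F] [BorelSpace F] (μ : Measure F) [μ.IsAddHaarMeasure]

lemma addHaar_le_ediam_pow_mul {T : Set F} (hT : ediam T ≠ ⊤) :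
    μ T ≤ ediam T ^ finrank ℝ F * μ (ball 0 1) := by
  rcases T.eq_empty_or_nonempty with rfl | ⟨x, hx⟩
  · simp
  calc μ T ≤ μ (closedBall x (ediam T).toReal) := measure_mono fun z hz ↦ by
        rw [mem_closedBall, dist_edist]
        exact ENNReal.toReal_mono hT (edist_le_ediam_of_mem hz hx)
    _ = ediam T ^ finrank ℝ F * μ (ball 0 1) := by
        rw [Measure.addHaar_closedBall _ _ ENNReal.toReal_nonneg,
          ENNReal.ofReal_pow ENNReal.toReal_nonneg, ENNReal.ofReal_toReal hT]

variable {X : Type*} [EMetricSpace X]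

lemma addHaar_image_le_of_lipschitzOnWith {f : X → F} {K : ℝ≥0} {s : Set X}
    (hf : LipschitzOnWith K f s) (hs : ediam s ≠ ⊤) :
    μ (f '' s) ≤ K ^ finrank ℝ F * μ (ball 0 1) * ediam s ^ finrank ℝ F := by
  have hdiam : ediam (f '' s) ≤ K * ediam s := ediam_image_le_iff.2 fun a ha b hb ↦
    (hf ha hb).trans (by gcongr; exact edist_le_ediam_of_mem ha hb)
  calc μ (f '' s) ≤ ediam (f '' s) ^ finrank ℝ F * μ (ball 0 1) :=
        addHaar_le_ediam_pow_mul μ (ne_top_of_le_ne_top (by finiteness) hdiam)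
    _ ≤ (K * ediam s) ^ finrank ℝ F * μ (ball 0 1) := by gcongr
    _ = K ^ finrank ℝ F * μ (ball 0 1) * ediam s ^ finrank ℝ F := by ring

variable [MeasurableSpace X] [BorelSpace X]

lemma exists_cover_tsum_ediam_rpow_lt {s : ℝ} {S : Set X} {a : ℝ≥0∞} (h : μH[s] S < a)
    {r : ℝ≥0∞} (hr : 0 < r) :
    ∃ t : ℕ → Set X, S ⊆ ⋃ n, t n ∧ (∀ n, ediam (t n) ≤ r) ∧
      ∑' n, ⨆ _ : (t n).Nonempty, ediam (t n) ^ s < a := by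
  rw [Measure.hausdorffMeasure_apply] at h
  simpa only [iInf_lt_iff, exists_prop] using (le_iSup₂_of_le r hr le_rfl).trans_lt h

/- Points of a fibre more than `r` apart lie in distinct pieces of an `r`-cover of `S`, so every
point of the set on the left lies in `N` of the images of the pieces. -/
lemma natCast_mul_addHaar_setOf_isSeparated_fiber_le {f : X → F} {K : ℝ≥0} {S : Set X}
    (hf : LipschitzOnWith K f S) (hS : μH[finrank ℝ F] S ≠ ⊤) (N : ℕ) {r : ℝ≥0∞} (hr : 0 < r)
    (hr' : r ≠ ⊤) :
    N * μ {p | ∃ T ⊆ S ∩ f ⁻¹' {p}, T.encard = N ∧ IsSeparated r T} ≤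
      K ^ finrank ℝ F * μ (ball 0 1) * (μH[finrank ℝ F] S + 1) := by
  set C := (K : ℝ≥0∞) ^ finrank ℝ F * μ (ball 0 1)
  obtain ⟨t, hcov, hdiam, hsum⟩ :=
    exists_cover_tsum_ediam_rpow_lt (ENNReal.lt_add_right hS one_ne_zero) hr
  choose! idx hidx using fun a (ha : a ∈ S) ↦ mem_iUnion.1 (hcov ha)
  have hmult : ∀ p ∈ {p | ∃ T ⊆ S ∩ f ⁻¹' {p}, T.encard = N ∧ IsSeparated r T},
      (N : ℝ≥0∞) ≤ {n | p ∈ f '' (t n ∩ S)}.encard := by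
    rintro p ⟨T, hTS, hTN, hTsep⟩
    have hinj : InjOn idx T := fun a ha b hb hab ↦ by_contra fun hne ↦
      (hTsep ha hb hne).not_ge <| (edist_le_ediam_of_mem (hidx a (hTS ha).1)
        (hab ▸ hidx b (hTS hb).1)).trans (hdiam _)
    have hsub : idx '' T ⊆ {n | p ∈ f '' (t n ∩ S)} := by
      rintro _ ⟨a, ha, rfl⟩
      exact ⟨a, ⟨hidx a (hTS ha).1, (hTS ha).1⟩, (hTS ha).2⟩
    have : (N : ℕ∞) ≤ {n | p ∈ f '' (t n ∩ S)}.encard := by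
      rw [← hTN, ← hinj.encard_image]
      exact encard_le_encard hsub
    exact_mod_cast this
  have hpiece : ∀ n, μ (f '' (t n ∩ S)) ≤
      C * ⨆ _ : (t n).Nonempty, ediam (t n) ^ (finrank ℝ F : ℝ) := by
    intro n
    rcases (t n ∩ S).eq_empty_or_nonempty with h | h
    · simp [h]
    rw [iSup_pos (h.mono inter_subset_left), ENNReal.rpow_natCast]
    calc μ (f '' (t n ∩ S)) ≤ C * ediam (t n ∩ S) ^ finrank ℝ F :=
          addHaar_image_le_of_lipschitzOnWith μ (hf.mono inter_subset_right)
            (ne_top_of_le_ne_top hr' ((ediam_mono inter_subset_left).trans (hdiam n)))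
      _ ≤ C * ediam (t n) ^ finrank ℝ F := by gcongr; exact inter_subset_left
  calc _ ≤ ∑' n, μ (f '' (t n ∩ S)) := mul_measure_le_tsum_of_le_encard μ _ hmult
    _ ≤ ∑' n, C * ⨆ _ : (t n).Nonempty, ediam (t n) ^ (finrank ℝ F : ℝ) :=
        ENNReal.tsum_le_tsum hpiece
    _ ≤ C * (μH[finrank ℝ F] S + 1) := by
        rw [ENNReal.tsum_mul_left]
        gcongr

theorem LipschitzOnWith.addHaar_setOf_infinite_fiber_eq_zero {f : X → F} {K : ℝ≥0}
    {S : Set X} (hf : LipschitzOnWith K f S) (hS : μH[finrank ℝ F] S ≠ ⊤) :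
    μ {p | (S ∩ f ⁻¹' {p}).Infinite} = 0 := by
  set C := (K : ℝ≥0∞) ^ finrank ℝ F * μ (ball 0 1) * (μH[finrank ℝ F] S + 1)
  have hC : C ≠ ⊤ := by
    have := measure_ball_lt_top (μ := μ) (x := 0) (r := 1)
    finiteness
  set E : ℕ → ℕ → Set F := fun N j ↦
    {p | ∃ T ⊆ S ∩ f ⁻¹' {p}, T.encard = N ∧ IsSeparated ((j : ℝ≥0∞) + 1)⁻¹ T}
  have hmono : ∀ N, Monotone (E N) := fun N j j' hjj' p ⟨T, hT, hTN, hTsep⟩ ↦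
    ⟨T, hT, hTN, hTsep.anti (by gcongr)⟩
  have hcover : ∀ N, {p | (S ∩ f ⁻¹' {p}).Infinite} ⊆ ⋃ j, E N j := by
    intro N p hp
    obtain ⟨T, hT, hTN⟩ := exists_subset_encard_eq (hp.encard_eq ▸ le_top : (N : ℕ∞) ≤ _)
    obtain ⟨j, hj⟩ := ENNReal.exists_inv_nat_lt
      (finite_of_encard_eq_coe hTN).einfsep_pos.ne'
    refine mem_iUnion.2 ⟨j, T, hT, hTN, fun a ha b hb hab ↦ ?_⟩
    calc ((j : ℝ≥0∞) + 1)⁻¹ ≤ (j : ℝ≥0∞)⁻¹ := by gcongr; exact le_self_add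
      _ < T.einfsep := hj
      _ ≤ edist a b := einfsep_le_edist_of_mem ha hb hab
  by_contra h0
  obtain ⟨N, hN⟩ := ENNReal.exists_nat_mul_gt h0 hC
  refine hN.not_ge ?_
  calc N * μ {p | (S ∩ f ⁻¹' {p}).Infinite} ≤ N * μ (⋃ j, E N j) := by
        gcongr; exact hcover N
    _ = ⨆ j, N * μ (E N j) := by rw [(hmono N).measure_iUnion, ENNReal.mul_iSup]
    _ ≤ C := iSup_le fun j ↦ natCast_mul_addHaar_setOf_isSeparated_fiber_le μ hf hS N
        (ENNReal.inv_pos.2 (by simp)) (ENNReal.inv_ne_top.2 (by simp))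

end AddHaar

section Segments

variable {E : Type*} [NormedAddCommGroup E] [InnerProductSpace ℝ E] [FiniteDimensional ℝ E]
  [MeasurableSpace E] [BorelSpace E]

lemma exists_null_forall_countable_closure_inter_segment {F : Type*} [NormedAddCommGroup F]
    [NormedSpace ℝ F] [FiniteDimensional ℝ F] [MeasurableSpace F] [BorelSpace F]
    (μ : Measure F) [μ.IsAddHaarMeasure] {Θ : Set E}
    (hΘ : μH[finrank ℝ F] Θ ≠ ⊤) {π : E → F} {L : ℝ≥0} (hπ : LipschitzWith L π) (q u : E)
    {c : ℝ} (hc : 0 < c) :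
    ∃ B : Set F, μ B = 0 ∧ ∀ m, ⟪m - q, u⟫ = c → π m ∉ B →
      (closure (Θ ∩ segment ℝ q m)).Countable := by
  set A : ℕ → Set E := fun k ↦ Θ ∩ ({z | 1 / (k + 1 : ℝ) ≤ ⟪z - q, u⟫} ∩ closedBall q k)
  refine ⟨⋃ k, {w | (A k ∩ (π ∘ centralProj q u c) ⁻¹' {w}).Infinite},
    measure_iUnion_null fun k ↦ ?_, fun m hm hmB ↦ ?_⟩
  · obtain ⟨K, hK⟩ := exists_lipschitzOnWith_centralProj q u c (β := 1 / (k + 1))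
      (by positivity) k
    exact (hπ.comp_lipschitzOnWith (hK.mono inter_subset_right))
      |>.addHaar_setOf_infinite_fiber_eq_zero μ
        (ne_top_of_le_ne_top hΘ (measure_mono inter_subset_left))
  refine countable_closure_of_finite_inter_superlevel (g := fun z ↦ ⟪z - q, u⟫) (q := q)
    (by fun_prop) (fun z hz hzq ↦ ?_) fun ε hε ↦ ?_
  · obtain ⟨θ, hθ, hzθ⟩ := exists_sub_eq_smul_of_mem_segment
      (closure_minimal inter_subset_right (isClosed_segment q m) hz) hzq
    simp only [hzθ, real_inner_smul_left, hm]
    exact mul_pos hθ.1 hc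
  obtain ⟨k, hk⟩ := exists_nat_one_div_lt hε
  obtain ⟨k', hk'⟩ := exists_nat_ge ‖m - q‖
  refine (not_infinite.1 fun h ↦ hmB (mem_iUnion.2 ⟨max k k', h⟩)).subset ?_
  rintro z ⟨⟨hzΘ, hzseg⟩, hzε⟩
  have hzq : z ≠ q := by
    rintro rfl
    simp only [mem_ofPred_eq, sub_self, inner_zero_left] at hzε
    linarith
  refine ⟨⟨hzΘ, ?_, ?_⟩, ?_⟩
  · calc 1 / ((max k k' : ℕ) + 1 : ℝ) ≤ 1 / (k + 1) := by gcongr; exact le_max_left k k'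
      _ ≤ ⟪z - q, u⟫ := hk.le.trans hzε
  · calc dist z q = ‖z - q‖ := dist_eq_norm z q
      _ ≤ ‖m - q‖ := norm_sub_le_of_mem_segment hzseg
      _ ≤ (max k k' : ℕ) := hk'.trans (by gcongr; exact le_max_right k k')
  · simp [centralProj_eq_of_mem_segment hm hc.ne' hzseg hzq]

lemma exists_countable_closure_inter_segments {Θ : Set E}
    (hΘ : μH[(finrank ℝ E : ℝ) - 1] Θ ≠ ⊤) (x y : E) {δ : ℝ} (hδ : 0 < δ) :
    ∃ m, dist x m + dist m y ≤ dist x y + δ ∧ (closure (Θ ∩ segment ℝ x m)).Countable ∧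
      (closure (Θ ∩ segment ℝ y m)).Countable := by
  rcases eq_or_ne x y with rfl | hxy
  · have h : (closure (Θ ∩ segment ℝ x x)).Countable := (countable_singleton x).mono
      (closure_minimal (by simp [segment_same]) isClosed_singleton)
    exact ⟨x, by simp [hδ.le], h, h⟩
  set W := (ℝ ∙ (y - x))ᗮ
  have hW : (finrank ℝ W : ℝ) = finrank ℝ E - 1 := by
    have := (ℝ ∙ (y - x)).finrank_add_finrank_orthogonal
    rw [finrank_span_singleton (sub_ne_zero.2 hxy.symm)] at this
    rw [← this]
    push_cast
    ring
  set π := W.orthogonalProjectionOnto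
  set z₀ := midpoint ℝ x y
  set c := ⟪z₀ - x, y - x⟫
  have hc : 0 < c := by
    simp only [c, z₀, midpoint_sub_left, real_inner_smul_left, real_inner_self_eq_norm_sq,
      invOf_eq_inv]
    have : 0 < ‖y - x‖ := norm_pos_iff.2 (sub_ne_zero.2 hxy.symm)
    positivity
  have hcy : ⟪z₀ - y, x - y⟫ = c := by
    simp only [c, z₀, midpoint_sub_left, midpoint_sub_right, real_inner_smul_left,
      real_inner_self_eq_norm_sq, norm_sub_rev x y]
  have horth : ∀ v : W, ⟪(v : E), y - x⟫ = 0 := fun v ↦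
    Submodule.mem_orthogonal_singleton_iff_inner_left.1 v.2
  obtain ⟨Bx, hBx, hx⟩ := exists_null_forall_countable_closure_inter_segment volume (hW ▸ hΘ)
    π.lipschitz x (y - x) hc
  obtain ⟨By, hBy, hy⟩ := exists_null_forall_countable_closure_inter_segment volume (hW ▸ hΘ)
    π.lipschitz y (x - y) hc
  obtain ⟨w, hw, hwB⟩ : (ball (π z₀) (δ / 2) \ (Bx ∪ By)).Nonempty :=
    nonempty_of_measure_ne_zero <| by
      rw [measure_sdiff_null (measure_union_null hBx hBy)]
      exact (measure_ball_pos _ _ (by positivity)).ne'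
  set v : W := w - π z₀
  set m := z₀ + (v : E)
  have hπm : π m = w := by
    rw [map_add, Submodule.orthogonalProjectionOnto_mem_subspace_eq_self, add_sub_cancel]
  have hmz₀ : dist m z₀ < δ / 2 := by
    simpa [m, v, dist_eq_norm] using hw
  refine ⟨m, ?_, hx m ?_ (hπm ▸ fun h ↦ hwB (Or.inl h)),
    hy m ?_ (hπm ▸ fun h ↦ hwB (Or.inr h))⟩
  · calc dist x m + dist m y ≤ (dist x z₀ + dist z₀ m) + (dist m z₀ + dist z₀ y) :=
          add_le_add (dist_triangle _ _ _) (dist_triangle _ _ _)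
      _ = dist x y + 2 * dist m z₀ := by
          rw [dist_comm z₀ m, ← dist_add_dist_of_mem_segment (midpoint_mem_segment x y)]
          ring
      _ ≤ dist x y + δ := by linarith
  · rw [show m - x = (z₀ - x) + v by simp only [m]; abel, inner_add_left, horth, add_zero]
  · have horth' : ⟪(v : E), x - y⟫ = 0 := by
      rw [← neg_sub, inner_neg_right, horth, neg_zero]
    rw [show m - y = (z₀ - y) + v by simp only [m]; abel, inner_add_left, horth', add_zero,
      hcy]

end Segments

theorem permeable_of_hausdorffMeasure_lt_top_general {d : ℕ}
    (Θ : Set (EuclideanSpace ℝ (Fin d)))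
    (hΘ : μH[((d : ℝ) - 1)] Θ < ⊤) :
    Permeable Θ := by
  intro x y δ hδ
  obtain ⟨m, hm, hxm, hym⟩ := exists_countable_closure_inter_segments
    (by simpa [finrank_euclideanSpace_fin] using hΘ.ne) x y hδ
  obtain ⟨γ, hγ, hγ0, hγ2, hlen, himage⟩ := exists_path_along_two_segments x m y
  refine ⟨0, 2, γ, two_pos, hγ, hγ0, hγ2, ?_, ?_⟩
  · calc pathLen γ 0 2 ≤ edist x m + edist m y := hlen
      _ = ENNReal.ofReal (dist x m + dist m y) := by
          rw [edist_dist, edist_dist, ENNReal.ofReal_add dist_nonneg dist_nonneg]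
      _ ≤ ENNReal.ofReal (‖y - x‖ + δ) := by
          rw [← dist_eq_norm, dist_comm y x]
          exact ENNReal.ofReal_le_ofReal hm
  · refine (hxm.union hym).mono ?_
    rw [← closure_union]
    refine closure_mono fun z ⟨hz, hzΘ⟩ ↦ ?_
    rcases himage hz with h | h
    · exact Or.inl ⟨hzΘ, h⟩
    · exact Or.inr ⟨hzΘ, segment_symm ℝ m y ▸ h⟩

/-- If `Θ ⊆ ℝ^d` (`d ≥ 1`) is a Borel set of finite `(d-1)`-dimensional Hausdorff measure,
then `Θ` is permeable. -/
theorem permeable_of_hausdorffMeasure_lt_top {d : ℕ} (hd : 1 ≤ d)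
    (Θ : Set (EuclideanSpace ℝ (Fin d))) (hmeas : MeasurableSet Θ)
    (hΘ : μH[((d : ℝ) - 1)] Θ < ⊤) :
    Permeable Θ :=
  permeable_of_hausdorffMeasure_lt_top_general Θ hΘ
end
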